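/- arXiv:2408.02819 — 4 statements merged into one kernel-verified Lean document; each statement's English description precedes it below -/
import Mathlib

section
/- For every tree T and every positive integer m with m ≥ diam(T) - 2, the (m,1)-game chromatic index of T is at most Δ(T) + 1. -/
namespace EdgeGame

variable {V : Type*}

/-- Two edges (as unordered pairs) are adjacent if they are distinct and share an endpoint. -/
def EAdj (e f : Sym2 V) : Prop := e ≠ f ∧ ∃ v, v ∈ e ∧ v ∈ f

/-- A proper (total) edge coloring with `k` colors. -/
def ProperColoring (G : SimpleGraph V) {k : ℕ} (c : Sym2 V → Fin k) : Prop :=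
  ∀ e f, e ∈ G.edgeSet → f ∈ G.edgeSet → EAdj e f → c e ≠ c f

/-- The chromatic index of `G`. -/
noncomputable def chromIndex (G : SimpleGraph V) : ℕ :=
  sInf {k | ∃ c : Sym2 V → Fin k, ProperColoring G c}

/-- A partial edge coloring is proper if adjacent colored edges receive distinct colors. -/
def Proper (G : SimpleGraph V) {k : ℕ} (c : Sym2 V → Option (Fin k)) : Prop :=
  ∀ e f, e ∈ G.edgeSet → f ∈ G.edgeSet → EAdj e f → ∀ a, c e = some a → c f ≠ some a

/-- `c'` extends the partial coloring `c` (no colored edge changes color). -/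
def Extends {k : ℕ} (c c' : Sym2 V → Option (Fin k)) : Prop :=
  ∀ e a, c e = some a → c' e = some a

/-- The number of uncolored edges of `G`. -/
noncomputable def uncolored (G : SimpleGraph V) {k : ℕ} (c : Sym2 V → Option (Fin k)) : ℕ :=
  {e | e ∈ G.edgeSet ∧ c e = none}.ncard

/-- `MakerWins G m k c b` : in the `(m,1)`-edge coloring game on `G` with `k` colors,
starting from the proper partial coloring `c`, with Maker to move iff `b = true`,
Maker has a winning strategy.  Maker colors `min m (number of uncolored edges)` edges
per turn, Breaker colors one edge per turn, all moves keep the coloring proper; Maker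
wins when all edges are colored, and loses when the player to move has no legal move. -/
inductive MakerWins (G : SimpleGraph V) (m k : ℕ) :
    (Sym2 V → Option (Fin k)) → Bool → Prop
  | all (c : Sym2 V → Option (Fin k)) (b : Bool)
      (h : ∀ e ∈ G.edgeSet, c e ≠ none) : MakerWins G m k c b
  | maker (c c' : Sym2 V → Option (Fin k)) (hne : uncolored G c ≠ 0)
      (hext : Extends c c') (hprop : Proper G c')
      (hcount : uncolored G c' = uncolored G c - min m (uncolored G c))
      (hnext : MakerWins G m k c' false) : MakerWins G m k c true
  | breaker (c : Sym2 V → Option (Fin k)) (hne : uncolored G c ≠ 0)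
      (hcan : ∃ c', Extends c c' ∧ Proper G c' ∧ uncolored G c' + 1 = uncolored G c)
      (h : ∀ c', Extends c c' → Proper G c' → uncolored G c' + 1 = uncolored G c →
        MakerWins G m k c' true) : MakerWins G m k c false

/-- The `(m,1)`-game chromatic index of `G`: the least number of colors with which
Maker has a winning strategy in the `(m,1)`-edge coloring game. -/
noncomputable def gameChromIndex (G : SimpleGraph V) (m : ℕ) : ℕ :=
  sInf {k | MakerWins G m k (fun _ => none) true}

/-- The wheel `W n`: a hub `none` joined to every vertex of the cycle on `Fin n`. -/
def wheel (n : ℕ) : SimpleGraph (Option (ZMod n)) :=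
  SimpleGraph.fromRel (fun a b => a = none ∨ ∃ i : ZMod n, a = some i ∧ b = some (i + 1))

/-- The `i`-th spoke of the wheel. -/
def spoke (n : ℕ) (i : ZMod n) : Sym2 (Option (ZMod n)) := s(none, some i)

/-- The `i`-th rim edge of the wheel. -/
def rim (n : ℕ) (i : ZMod n) : Sym2 (Option (ZMod n)) := s(some i, some (i + 1))

/-- A caterpillar: a tree together with a path (the spine) whose support consists
exactly of the vertices of degree at least two. -/
def IsCaterpillar (G : SimpleGraph V) [Fintype V] [DecidableRel G.Adj] : Prop :=
  G.IsTree ∧ ∃ (u v : V) (p : G.Walk u v), p.IsPath ∧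
    ∀ w : V, w ∈ p.support ↔ 2 ≤ G.degree w

section Proof4
open SimpleGraph
variable {V : Type*} {G : SimpleGraph V}

/-- In a tree, every path realizes the distance. -/
lemma tree_path_length (hT : G.IsTree) {u v : V} (p : G.Walk u v) (hp : p.IsPath) :
    p.length = G.dist u v := by
  obtain ⟨q, hq, hlen⟩ := (hT.isConnected u v).exists_path_of_dist
  obtain ⟨w, hw, huniq⟩ := hT.existsUnique_path u v
  rw [huniq p hp, ← huniq q hq, hlen]

lemma concat_isPath (hT : G.IsTree) {u v w : V} {p : G.Walk u v} (hp : p.IsPath)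
    (h : G.Adj v w) (hw : w ∉ p.support) : (p.concat h).IsPath := by
  rw [← Walk.isPath_reverse_iff, Walk.reverse_concat, Walk.cons_isPath_iff]
  exact ⟨hp.reverse, by simpa [Walk.support_reverse] using hw⟩

/-- In a tree, adjacent vertices have different distances to any root. -/
lemma tree_adj_dist_ne (hT : G.IsTree) (r : V) {u v : V} (h : G.Adj u v) :
    G.dist r u ≠ G.dist r v := by
  classical
  intro heq
  obtain ⟨p, hp, hlen⟩ := (hT.isConnected r u).exists_path_of_dist
  by_cases hv : v ∈ p.support
  · have h1 : (p.takeUntil v hv).length = G.dist r v := tree_path_length hT _ (hp.takeUntil hv)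
    have h2 := congrArg Walk.length (p.take_spec hv)
    rw [Walk.length_append] at h2
    have h3 : (p.dropUntil v hv).length = 0 := by omega
    exact h.ne' (Walk.eq_of_length_eq_zero h3)
  · have hq : (p.concat h).IsPath := concat_isPath hT hp h hv
    have := tree_path_length hT _ hq
    rw [Walk.length_concat, hlen] at this
    omega

/-- In a tree, distances of adjacent vertices differ by exactly one. -/
lemma tree_adj_dist (hT : G.IsTree) (r : V) {u v : V} (h : G.Adj u v) :
    G.dist r v = G.dist r u + 1 ∨ G.dist r u = G.dist r v + 1 := by
  have h1 : G.dist r v ≤ G.dist r u + 1 := by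
    have := hT.isConnected.dist_triangle (u := r) (v := u) (w := v)
    have hd : G.dist u v ≤ 1 := G.dist_le (Walk.cons h Walk.nil)
    omega
  have h2 : G.dist r u ≤ G.dist r v + 1 := by
    have := hT.isConnected.dist_triangle (u := r) (v := v) (w := u)
    have hd : G.dist v u ≤ 1 := G.dist_le (Walk.cons h.symm Walk.nil)
    omega
  have h3 := tree_adj_dist_ne hT r h
  omega

/-- In a tree, the neighbour of `v` closer to the root is unique. -/
lemma tree_parent_unique (hT : G.IsTree) (r : V) {v u₁ u₂ : V}
    (h1 : G.Adj v u₁) (h2 : G.Adj v u₂)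
    (d1 : G.dist r u₁ + 1 = G.dist r v) (d2 : G.dist r u₂ + 1 = G.dist r v) : u₁ = u₂ := by
  classical
  have key : ∀ {u : V}, G.Adj v u → G.dist r u + 1 = G.dist r v →
      ∃ q : G.Walk r v, q.IsPath ∧ q.reverse.getVert 1 = u := by
    intro u hadj hd
    obtain ⟨p, hp, hlen⟩ := (hT.isConnected r u).exists_path_of_dist
    have hv : v ∉ p.support := by
      intro hv
      have h1' : (p.takeUntil v hv).length = G.dist r v := tree_path_length hT _ (hp.takeUntil hv)
      have h2' := Walk.length_takeUntil_le p hv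
      omega
    refine ⟨p.concat hadj.symm, concat_isPath hT hp hadj.symm hv, ?_⟩
    rw [Walk.reverse_concat]
    exact Walk.snd_cons _ _
  obtain ⟨q1, hq1, he1⟩ := key h1 d1
  obtain ⟨q2, hq2, he2⟩ := key h2 d2
  obtain ⟨w, hw, huniq⟩ := hT.existsUnique_path r v
  rw [← he1, ← he2, huniq q1 hq1, huniq q2 hq2]

/-- Climbing lemma: in a tree, once a path moves away from `z`, it keeps moving away. -/
lemma tree_climb (hT : G.IsTree) (z : V) :
    ∀ {a y b : V} (h : G.Adj a y) (Q : G.Walk y b), (Walk.cons h Q).IsPath →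
      G.dist z y = G.dist z a + 1 → G.dist z b = G.dist z a + 1 + Q.length := by
  intro a y b h Q
  induction Q generalizing a with
  | nil => intro _ hd; simpa using hd
  | @cons y₁ w₁ b₁ h' Q' ih =>
    intro hP hd
    have hP' : (Walk.cons h' Q').IsPath ∧ a ∉ (Walk.cons h' Q').support :=
      (Walk.cons_isPath_iff h (Walk.cons h' Q')).mp hP
    have hwa : w₁ ≠ a := by
      intro hwa; exact hP'.2 (hwa ▸ Walk.mem_support_iff_exists_getVert.mpr
        ⟨1, Walk.snd_cons _ _, by simp⟩)
    have hdw : G.dist z w₁ = G.dist z y₁ + 1 := by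
      rcases tree_adj_dist hT z h' with hc | hc
      · exact hc
      · exfalso
        exact hwa (tree_parent_unique hT z h' h.symm (by omega) (by omega))
    have := ih h' hP'.1 hdw
    simp only [Walk.length_cons]
    omega

/-- A tree of positive diameter has a vertex of eccentricity smaller than the diameter. -/
lemma tree_center (hT : G.IsTree) [Finite V] (hd : 2 ≤ G.diam) :
    ∃ r : V, ∀ w : V, G.dist r w ≤ G.diam - 1 := by
  have hne : Nonempty V := hT.isConnected.nonempty
  have hetop : G.ediam ≠ ⊤ := by
    cases nonempty_fintype V
    obtain ⟨u, v, huv⟩ := G.exists_edist_eq_ediam_of_finite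
    rw [← huv, edist_ne_top_iff_reachable]
    exact hT.isConnected u v
  by_contra hcon
  push_neg at hcon
  have hfar : ∀ v : V, ∃ w, G.dist v w = G.diam := by
    intro v
    obtain ⟨w, hw⟩ := hcon v
    exact ⟨w, le_antisymm (G.dist_le_diam hetop) (by omega)⟩
  obtain ⟨a, b, hab⟩ := G.exists_dist_eq_diam
  obtain ⟨P, hP, hlen⟩ := (hT.isConnected a b).exists_path_of_dist
  rw [hab] at hlen
  cases P with
  | nil => simp at hlen; omega
  | @cons _ c _ h Q =>
    obtain ⟨z, hz⟩ := hfar c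
    have hza : G.dist z a = G.diam - 1 := by
      have h1 : G.dist z a ≤ G.diam := G.dist_le_diam hetop
      have h2 : G.dist z c = G.diam := by rw [dist_comm (G:=G)]; exact hz
      rcases tree_adj_dist hT z h with hc | hc <;> omega
    have hzc : G.dist z c = G.dist z a + 1 := by
      rw [hza, dist_comm (G:=G) (u:=z) (v:=c), hz]; omega
    have := tree_climb hT z h Q hP hzc
    have hzb : G.dist z b ≤ G.diam := G.dist_le_diam hetop
    simp only [Walk.length_cons] at hlen
    omega

section Rooted
variable [Nonempty V]

/-- The depth of an edge: larger distance of its endpoints from the root. -/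
noncomputable def dep (G : SimpleGraph V) (r : V) (e : Sym2 V) : ℕ :=
  Sym2.lift ⟨fun u v => max (G.dist r u) (G.dist r v), fun u v => by simp [max_comm]⟩ e

def OriSpec (G : SimpleGraph V) (r : V) (e : Sym2 V) (p : V × V) : Prop :=
  e = s(p.1, p.2) ∧ G.dist r p.1 + 1 = G.dist r p.2

noncomputable def topV (G : SimpleGraph V) (r : V) (e : Sym2 V) : V :=
  (Classical.epsilon (OriSpec G r e)).1
noncomputable def botV (G : SimpleGraph V) (r : V) (e : Sym2 V) : V :=
  (Classical.epsilon (OriSpec G r e)).2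

noncomputable def parV (G : SimpleGraph V) (r : V) (v : V) : V :=
  Classical.epsilon (fun u => G.Adj v u ∧ G.dist r u + 1 = G.dist r v)

open Classical in
noncomputable def pe (G : SimpleGraph V) (r : V) (e : Sym2 V) : Option (Sym2 V) :=
  if e ∈ G.edgeSet ∧ topV G r e ≠ r then some s(topV G r e, parV G r (topV G r e)) else none

variable {G : SimpleGraph V} {r : V}

lemma exists_ori (hT : G.IsTree) {e : Sym2 V} (he : e ∈ G.edgeSet) :
    ∃ p, OriSpec G r e p := by
  induction e with
  | _ u v =>
    rw [SimpleGraph.mem_edgeSet] at he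
    rcases tree_adj_dist hT r he with hc | hc
    · exact ⟨(u, v), rfl, hc.symm⟩
    · exact ⟨(v, u), Sym2.eq_swap.symm, hc.symm⟩

lemma ori_spec (hT : G.IsTree) {e : Sym2 V} (he : e ∈ G.edgeSet) :
    e = s(topV G r e, botV G r e) ∧ G.dist r (topV G r e) + 1 = G.dist r (botV G r e) :=
  Classical.epsilon_spec (exists_ori hT he)

lemma ori_eq (hT : G.IsTree) {e : Sym2 V} (he : e ∈ G.edgeSet) {u v : V}
    (h : OriSpec G r e (u, v)) : topV G r e = u ∧ botV G r e = v := by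
  obtain ⟨h1, h2⟩ := ori_spec hT he
  obtain ⟨h3, h4⟩ := h
  rw [h1] at h3
  rcases Sym2.eq_iff.mp h3 with ⟨ha, hb⟩ | ⟨ha, hb⟩
  · exact ⟨ha, hb⟩
  · exfalso; rw [← ha, ← hb] at h4; omega

lemma adj_top_bot (hT : G.IsTree) {e : Sym2 V} (he : e ∈ G.edgeSet) :
    G.Adj (topV G r e) (botV G r e) := by
  have h := (ori_spec (r := r) hT he).1
  have he' := he
  rw [h] at he'; exact G.mem_edgeSet.mp he'

lemma dep_eq_bot (hT : G.IsTree) {e : Sym2 V} (he : e ∈ G.edgeSet) :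
    dep G r e = G.dist r (botV G r e) ∧ dep G r e = G.dist r (topV G r e) + 1 := by
  obtain ⟨h1, h2⟩ := ori_spec (r := r) hT he
  constructor
  · conv_lhs => rw [h1]
    simp only [dep, Sym2.lift_mk]
    omega
  · conv_lhs => rw [h1]
    simp only [dep, Sym2.lift_mk]
    omega

lemma dep_pos (hT : G.IsTree) {e : Sym2 V} (he : e ∈ G.edgeSet) : 1 ≤ dep G r e :=
  (dep_eq_bot hT he).2 ▸ Nat.succ_le_succ (Nat.zero_le _)

lemma dep_le (hT : G.IsTree) {R : ℕ} (hR : ∀ w, G.dist r w ≤ R) {e : Sym2 V}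
    (he : e ∈ G.edgeSet) : dep G r e ≤ R :=
  (dep_eq_bot hT he).1 ▸ hR _

lemma parV_spec (hT : G.IsTree) {v : V} (hv : v ≠ r) :
    G.Adj v (parV G r v) ∧ G.dist r (parV G r v) + 1 = G.dist r v := by
  apply Classical.epsilon_spec (p := fun u => G.Adj v u ∧ G.dist r u + 1 = G.dist r v)
  have hd0 : G.dist r v ≠ 0 := by
    intro h0
    exact hv ((hT.isConnected.dist_eq_zero_iff).mp h0).symm
  obtain ⟨p, hp, hlen⟩ := (hT.isConnected r v).exists_path_of_dist
  have hnil : ¬ p.reverse.Nil := by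
    rw [SimpleGraph.Walk.not_nil_iff_lt_length, SimpleGraph.Walk.length_reverse]
    omega
  refine ⟨p.reverse.getVert 1, p.reverse.adj_snd hnil, ?_⟩
  have htail : (p.reverse.tail).IsPath := hp.reverse.tail
  have hlt : (p.reverse.tail).length = G.dist r v - 1 := by
    have := SimpleGraph.Walk.length_tail_add_one hnil
    rw [SimpleGraph.Walk.length_reverse] at this
    omega
  have hdist : G.dist (p.reverse.getVert 1) r = G.dist r v - 1 := by
    rw [← tree_path_length hT _ htail] at *
    omega
  rw [dist_comm (G := G)] at hdist
  have hadj := p.reverse.adj_snd hnil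
  rcases tree_adj_dist hT r hadj with hc | hc <;> omega

lemma pe_eq_some (hT : G.IsTree) {e : Sym2 V} (he : e ∈ G.edgeSet)
    (htop : topV G r e ≠ r) :
    pe G r e = some s(topV G r e, parV G r (topV G r e)) := by
  rw [pe, if_pos ⟨he, htop⟩]

lemma pe_eq_none {e : Sym2 V} (h : ¬ (e ∈ G.edgeSet ∧ topV G r e ≠ r)) :
    pe G r e = none := by
  rw [pe, if_neg h]

lemma pe_some_elim (hT : G.IsTree) {e f : Sym2 V} (h : pe G r e = some f) :
    e ∈ G.edgeSet ∧ f ∈ G.edgeSet ∧ dep G r f + 1 = dep G r e ∧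
      f = s(topV G r e, parV G r (topV G r e)) := by
  by_cases hc : e ∈ G.edgeSet ∧ topV G r e ≠ r
  · obtain ⟨he, htop⟩ := hc
    rw [pe_eq_some hT he htop] at h
    replace h : s(topV G r e, parV G r (topV G r e)) = f := Option.some_inj.mp h
    obtain ⟨hadj, hd⟩ := parV_spec hT htop
    have hfes : s(topV G r e, parV G r (topV G r e)) ∈ G.edgeSet := hadj
    refine ⟨he, h ▸ hfes, ?_, h.symm⟩
    obtain ⟨hd1, hd2⟩ := dep_eq_bot (r := r) hT he
    have : dep G r f = G.dist r (topV G r e) := by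
      rw [← h]
      show dep G r s(topV G r e, parV G r (topV G r e)) = _
      simp only [dep, Sym2.lift_mk]
      omega
    omega
  · rw [pe_eq_none hc] at h; exact absurd h (by simp)

/-- Every colored-adjacent edge sharing the bottom vertex of `e` is a `pe`-child of `e`. -/
lemma child_pe (hT : G.IsTree) {e f : Sym2 V} (he : e ∈ G.edgeSet) (hf : f ∈ G.edgeSet)
    (hne : f ≠ e) (hshare : botV G r e ∈ f) : pe G r f = some e := by
  obtain ⟨he1, he2⟩ := ori_spec (r := r) hT he
  set u := topV G r e with hu
  set v := botV G r e with hv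
  obtain ⟨w, hw⟩ : ∃ w, f = s(v, w) := ⟨Sym2.Mem.other hshare, (Sym2.other_spec hshare).symm⟩
  have hadjvw : G.Adj v w := by
    have hf' := hf; rw [hw] at hf'; exact G.mem_edgeSet.mp hf'
  have hwu : w ≠ u := by
    intro hwu
    apply hne
    rw [hw, hwu, he1, Sym2.eq_swap]
  have hadjvu : G.Adj v u := by
    have he' := he; rw [he1] at he'; exact (G.mem_edgeSet.mp he').symm
  have hdw : G.dist r w = G.dist r v + 1 := by
    rcases tree_adj_dist hT r hadjvw with hc | hc
    · exact hc
    · exact absurd (tree_parent_unique hT r hadjvw hadjvu (by omega) (by omega)) hwu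
  have hori : OriSpec G r f (v, w) := ⟨hw, by dsimp only; omega⟩
  obtain ⟨htf, hbf⟩ := ori_eq hT hf hori
  have hvr : v ≠ r := by
    intro hvr
    rw [hvr] at he2
    simp [SimpleGraph.dist_self] at he2
  rw [pe_eq_some hT hf (htf ▸ hvr)]
  congr 1
  rw [htf]
  obtain ⟨hpadj, hpd⟩ := parV_spec hT hvr
  have := tree_parent_unique hT r hpadj hadjvu (by omega) (by omega)
  rw [this, he1, Sym2.eq_swap]

end Rooted


section GameSec
variable [Fintype V] [Nonempty V]

lemma eadj_symm {e f : Sym2 V} (h : EAdj e f) : EAdj f e :=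
  ⟨h.1.symm, h.2.imp fun v hv => ⟨hv.2, hv.1⟩⟩

noncomputable def iterPe (G : SimpleGraph V) (r : V) : ℕ → Sym2 V → Option (Sym2 V)
  | 0, e => some e
  | n+1, e => (iterPe G r n e).bind (pe G r)

lemma iterPe_zero (G : SimpleGraph V) (r : V) (e : Sym2 V) : iterPe G r 0 e = some e := rfl

lemma iterPe_succ (G : SimpleGraph V) (r : V) (n : ℕ) (e : Sym2 V) :
    iterPe G r (n+1) e = (iterPe G r n e).bind (pe G r) := rfl

lemma iterPe_elim {G : SimpleGraph V} {r : V} (hT : G.IsTree) :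
    ∀ {i : ℕ} {b f : Sym2 V}, iterPe G r (i+1) b = some f →
      b ∈ G.edgeSet ∧ f ∈ G.edgeSet ∧ dep G r f + (i+1) ≤ dep G r b := by
  intro i
  induction i with
  | zero =>
    intro b f h
    rw [iterPe_succ] at h
    obtain ⟨g, hg, hpg⟩ := Option.bind_eq_some_iff.mp h
    have hg' : g = b := (Option.some_inj.mp (by rw [← iterPe_zero G r b]; exact hg.symm))
    subst hg'
    obtain ⟨hb, hf, hd, _⟩ := pe_some_elim hT hpg
    exact ⟨hb, hf, by omega⟩
  | succ n ih =>
    intro b f h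
    rw [iterPe_succ] at h
    obtain ⟨g, hg, hpg⟩ := Option.bind_eq_some_iff.mp h
    obtain ⟨hb, hg1, hg2⟩ := ih hg
    obtain ⟨_, hf, hd, _⟩ := pe_some_elim hT hpg
    exact ⟨hb, hf, by omega⟩

variable {G : SimpleGraph V} {r : V} {Δ : ℕ}

/-- The coloring is downward closed except possibly at the edge `b`. -/
def ClosedExcept (G : SimpleGraph V) (r : V) {k : ℕ} (c : Sym2 V → Option (Fin k))
    (b : Sym2 V) : Prop :=
  ∀ g ∈ G.edgeSet, c g ≠ none → g ≠ b → ∀ f, pe G r g = some f → c f ≠ none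

/-- The coloring is downward closed. -/
def ClosedC (G : SimpleGraph V) (r : V) {k : ℕ} (c : Sym2 V → Option (Fin k)) : Prop :=
  ∀ g ∈ G.edgeSet, c g ≠ none → ∀ f, pe G r g = some f → c f ≠ none

lemma ClosedC.closedExcept {k : ℕ} {c : Sym2 V → Option (Fin k)} (h : ClosedC G r c)
    (b : Sym2 V) : ClosedExcept G r c b := fun g hg hcg _ => h g hg hcg

open Classical in
noncomputable def upd {k : ℕ} (c : Sym2 V → Option (Fin k)) (e : Sym2 V) (a : Fin k) :
    Sym2 V → Option (Fin k) := fun x => if x = e then some a else c x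

lemma upd_extends {k : ℕ} (c : Sym2 V → Option (Fin k)) {e : Sym2 V} (a : Fin k)
    (he : c e = none) : Extends c (upd c e a) := by
  intro f x hfx
  unfold upd
  split
  · next h => rw [h] at hfx; rw [hfx] at he; exact absurd he (by simp)
  · exact hfx

lemma upd_uncolored (c : Sym2 V → Option (Fin (Δ+1))) {e : Sym2 V} (a : Fin (Δ+1))
    (he : c e = none) (hees : e ∈ G.edgeSet) :
    uncolored G (upd c e a) + 1 = uncolored G c := by
  have hset : {x | x ∈ G.edgeSet ∧ upd c e a x = none} =
      {x | x ∈ G.edgeSet ∧ c x = none} \ {e} := by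
    ext x
    simp only [Set.mem_setOf_eq, Set.mem_diff, Set.mem_singleton_iff, upd]
    constructor
    · rintro ⟨hx, hc⟩
      split at hc
      · exact absurd hc (by simp)
      · next h => exact ⟨⟨hx, hc⟩, h⟩
    · rintro ⟨⟨hx, hc⟩, hne⟩
      refine ⟨hx, ?_⟩
      rw [if_neg hne]; exact hc
  unfold uncolored
  rw [hset]
  exact Set.ncard_diff_singleton_add_one ⟨hees, he⟩

/-- The key counting step: an uncolored edge whose parent is colored can be properly colored. -/
lemma step_lemma (hT : G.IsTree) (hΔ : ∀ v : V, (G.incidenceSet v).ncard ≤ Δ)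
    {c : Sym2 V → Option (Fin (Δ+1))} (hc : Proper G c) {b e : Sym2 V}
    (hce : ClosedExcept G r c b) (he : e ∈ G.edgeSet) (hue : c e = none)
    (hpar : ∀ f, pe G r e = some f → c f ≠ none) :
    ∃ a : Fin (Δ+1), Proper G (upd c e a) := by
  classical
  set N : Set (Sym2 V) := {f | f ∈ G.edgeSet ∧ EAdj e f ∧ c f ≠ none} with hN
  have hNsub : N ⊆ (G.incidenceSet (topV G r e) \ {e}) ∪ {b} := by
    rintro f ⟨hf, ⟨hne, x, hxe, hxf⟩, hcf⟩
    have hxe' : x = topV G r e ∨ x = botV G r e := by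
      have h1 := (ori_spec (r := r) hT he).1
      rw [h1, Sym2.mem_iff] at hxe
      exact hxe
    rcases hxe' with hx | hx
    · left
      exact ⟨⟨hf, hx ▸ hxf⟩, fun hfe => hne (hfe.symm ▸ rfl)⟩
    · right
      have hchild : pe G r f = some e :=
        child_pe hT he hf (fun h => hne h.symm) (hx ▸ hxf)
      by_contra hfb
      exact hce f hf hcf hfb e hchild hue
  have hNcard : N.ncard ≤ Δ := by
    have h1 : N.ncard ≤ (G.incidenceSet (topV G r e) \ {e}).ncard + ({b} : Set (Sym2 V)).ncard :=
      le_trans (Set.ncard_le_ncard hNsub) (Set.ncard_union_le _ _)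
    have hmem : e ∈ G.incidenceSet (topV G r e) := by
      refine ⟨he, ?_⟩
      conv_lhs => rw [(ori_spec (r := r) hT he).1]
      simp
    have h2 : (G.incidenceSet (topV G r e) \ {e}).ncard =
        (G.incidenceSet (topV G r e)).ncard - 1 := Set.ncard_diff_singleton_of_mem hmem
    have h3 : 1 ≤ (G.incidenceSet (topV G r e)).ncard := by
      have : 0 < (G.incidenceSet (topV G r e)).ncard :=
        (Set.ncard_pos (Set.toFinite _)).mpr ⟨e, hmem⟩
      omega
    have h4 := hΔ (topV G r e)
    have h5 : ({b} : Set (Sym2 V)).ncard = 1 := Set.ncard_singleton b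
    omega
  set cols : Set (Fin (Δ+1)) := {a | ∃ f ∈ N, c f = some a} with hcols
  have hcolcard : cols.ncard ≤ Δ := by
    have hsub : cols ⊆ (fun f => (c f).getD ⟨0, Nat.succ_pos Δ⟩) '' N := by
      rintro a ⟨f, hf, hcf⟩
      exact ⟨f, hf, by simp [hcf]⟩
    calc cols.ncard ≤ _ := Set.ncard_le_ncard hsub
      _ ≤ N.ncard := Set.ncard_image_le
      _ ≤ Δ := hNcard
  have hex : ∃ a : Fin (Δ+1), a ∉ cols := by
    by_contra hcon
    push_neg at hcon
    have : cols = Set.univ := Set.eq_univ_of_forall hcon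
    rw [this, Set.ncard_univ, Nat.card_eq_fintype_card, Fintype.card_fin] at hcolcard
    omega
  obtain ⟨a, ha⟩ := hex
  refine ⟨a, ?_⟩
  intro e1 f1 he1 hf1 hadj a1 h1
  unfold upd at h1 ⊢
  by_cases he1e : e1 = e <;> by_cases hf1e : f1 = e
  · exact absurd (he1e.trans hf1e.symm) hadj.1
  · rw [if_pos he1e] at h1
    rw [if_neg hf1e]
    intro hf1c
    apply ha
    refine ⟨f1, ⟨hf1, he1e ▸ hadj, by simp [hf1c]⟩, ?_⟩
    rw [hf1c]
    congr 1
    exact (Option.some_inj.mp h1).symm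
  · rw [if_neg he1e] at h1
    rw [if_pos hf1e]
    intro hac
    apply ha
    have ha1 : a1 = a := (Option.some_inj.mp hac).symm
    exact ⟨e1, ⟨he1, eadj_symm (hf1e ▸ hadj), by simp [h1]⟩, ha1 ▸ h1⟩
  · rw [if_neg he1e] at h1
    rw [if_neg hf1e]
    exact hc e1 f1 he1 hf1 hadj a1 h1

lemma Extends.trans' {k : ℕ} {c1 c2 c3 : Sym2 V → Option (Fin k)} (h1 : Extends c1 c2)
    (h2 : Extends c2 c3) : Extends c1 c3 := fun e a ha => h2 e a (h1 e a ha)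

lemma Extends.ne_none {k : ℕ} {c1 c2 : Sym2 V → Option (Fin k)} (h : Extends c1 c2)
    {e : Sym2 V} (he : c1 e ≠ none) : c2 e ≠ none := by
  obtain ⟨a, ha⟩ := Option.ne_none_iff_exists'.mp he
  rw [h e a ha]; simp

lemma upd_ne {k : ℕ} (c : Sym2 V → Option (Fin k)) {e x : Sym2 V} (a : Fin k)
    (h : x ≠ e) : upd c e a x = c x := by
  unfold upd; rw [if_neg h]

lemma upd_none_elim {k : ℕ} {c : Sym2 V → Option (Fin k)} {e x : Sym2 V} {a : Fin k}
    (h : upd c e a x = none) : c x = none ∧ x ≠ e := by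
  unfold upd at h
  split at h
  · exact absurd h (by simp)
  · next hne => exact ⟨h, hne⟩

lemma all_colored {c : Sym2 V → Option (Fin (Δ+1))} (h : uncolored G c = 0) :
    ∀ e ∈ G.edgeSet, c e ≠ none := by
  intro e he hce
  have : {e | e ∈ G.edgeSet ∧ c e = none} = ∅ := by
    rw [← Set.ncard_eq_zero (Set.toFinite _)]; exact h
  exact absurd (this ▸ ⟨he, hce⟩ : e ∈ (∅ : Set (Sym2 V))) (by simp)

lemma phase1 (hT : G.IsTree) (hΔ : ∀ v : V, (G.incidenceSet v).ncard ≤ Δ) {b : Sym2 V} :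
    ∀ (j : ℕ) (c : Sym2 V → Option (Fin (Δ+1))), Proper G c → ClosedExcept G r c b →
      (∀ i f, iterPe G r (i+1) b = some f → c f = none → i + 1 ≤ j) →
      ∃ c' t, t ≤ j ∧ Extends c c' ∧ Proper G c' ∧ ClosedExcept G r c' b ∧
        t ≤ uncolored G c ∧ uncolored G c' + t = uncolored G c ∧
        (∀ i f, iterPe G r (i+1) b = some f → c' f ≠ none) := by
  intro j
  induction j with
  | zero =>
    intro c hc hce hbd
    refine ⟨c, 0, le_refl _, fun e a ha => ha, hc, hce, Nat.zero_le _, rfl, ?_⟩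
    intro i f hif hcf
    exact absurd (hbd i f hif hcf) (by omega)
  | succ j ih =>
    intro c hc hce hbd
    by_cases hall : ∀ i f, iterPe G r (i+1) b = some f → c f ≠ none
    · exact ⟨c, 0, Nat.zero_le _, fun e a ha => ha, hc, hce, Nat.zero_le _, rfl, hall⟩
    · push_neg at hall
      obtain ⟨i0, f0, hif0, hcf0⟩ := hall
      set S : Set ℕ := {i | ∃ f, iterPe G r (i+1) b = some f ∧ c f = none} with hS
      have hSne : S.Nonempty := ⟨i0, f0, hif0, hcf0⟩
      have hBdd : BddAbove S := by
        refine ⟨j + 1, ?_⟩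
        rintro i ⟨f, hif, hcf⟩
        have := hbd i f hif hcf
        omega
      set i₁ := sSup S with hi₁
      have hi₁mem : i₁ ∈ S := Nat.sSup_mem hSne hBdd
      obtain ⟨f₁, hf₁iter, hf₁none⟩ := hi₁mem
      have hi₁le : i₁ + 1 ≤ j + 1 := hbd i₁ f₁ hf₁iter hf₁none
      have hf₁es : f₁ ∈ G.edgeSet := (iterPe_elim hT hf₁iter).2.1
      have hpar : ∀ g, pe G r f₁ = some g → c g ≠ none := by
        intro g hg hcg
        have hiter2 : iterPe G r (i₁ + 1 + 1) b = some g := by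
          rw [iterPe_succ, hf₁iter]
          simpa using hg
        have : i₁ + 1 ∈ S := ⟨g, hiter2, hcg⟩
        have := le_csSup hBdd this
        omega
      obtain ⟨a, hprop⟩ := step_lemma hT hΔ hc hce hf₁es hf₁none hpar
      set c1 := upd c f₁ a with hc1
      have hext1 : Extends c c1 := upd_extends c a hf₁none
      have hce1 : ClosedExcept G r c1 b := by
        intro g hg hcg hgb fp hpe
        by_cases hgf : g = f₁
        · exact (hext1).ne_none (hpar fp (hgf ▸ hpe))
        · rw [hc1, upd_ne c a hgf] at hcg
          exact (hext1).ne_none (hce g hg hcg hgb fp hpe)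
      have hbd1 : ∀ i f, iterPe G r (i+1) b = some f → c1 f = none → i + 1 ≤ j := by
        intro i f hif hcf
        obtain ⟨hcf', hne⟩ := upd_none_elim hcf
        have hiS : i ∈ S := ⟨f, hif, hcf'⟩
        have hile := le_csSup hBdd hiS
        have : i ≠ i₁ := by
          intro hii
          rw [hii, hf₁iter] at hif
          exact hne (Option.some_inj.mp hif).symm
        omega
      obtain ⟨c', t, ht, hext, hprop', hce', htu, hcount, hanc⟩ := ih c1 hprop hce1 hbd1
      have hcnt1 : uncolored G c1 + 1 = uncolored G c := upd_uncolored c a hf₁none hf₁es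
      exact ⟨c', t + 1, by omega, hext1.trans' hext, hprop', hce', by omega, by omega, hanc⟩

lemma phase2 (hT : G.IsTree) (hΔ : ∀ v : V, (G.incidenceSet v).ncard ≤ Δ) :
    ∀ (n : ℕ) (c : Sym2 V → Option (Fin (Δ+1))), Proper G c → ClosedC G r c →
      n ≤ uncolored G c →
      ∃ c', Extends c c' ∧ Proper G c' ∧ ClosedC G r c' ∧
        uncolored G c' + n = uncolored G c := by
  intro n
  induction n with
  | zero => intro c hc hcl _; exact ⟨c, fun e a ha => ha, hc, hcl, rfl⟩
  | succ n ih =>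
    intro c hc hcl hn
    have hUne : {e | e ∈ G.edgeSet ∧ c e = none}.Nonempty := by
      rw [← Set.ncard_pos (Set.toFinite _)]
      show 0 < uncolored G c
      omega
    have himg : (dep G r '' {e | e ∈ G.edgeSet ∧ c e = none}).Nonempty := hUne.image _
    obtain ⟨e, heU, hdepe⟩ := Nat.sInf_mem himg
    obtain ⟨hees, hnone⟩ := heU
    have hpar : ∀ g, pe G r e = some g → c g ≠ none := by
      intro g hg hcg
      obtain ⟨_, hges, hdg, _⟩ := pe_some_elim hT hg
      have : dep G r g ∈ dep G r '' {e | e ∈ G.edgeSet ∧ c e = none} := ⟨g, ⟨hges, hcg⟩, rfl⟩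
      have := Nat.sInf_le this
      omega
    obtain ⟨a, hprop⟩ := step_lemma hT hΔ hc (hcl.closedExcept e) hees hnone hpar
    set c1 := upd c e a with hc1
    have hext1 : Extends c c1 := upd_extends c a hnone
    have hcl1 : ClosedC G r c1 := by
      intro g hg hcg fp hpe
      by_cases hge : g = e
      · exact hext1.ne_none (hpar fp (hge ▸ hpe))
      · rw [hc1, upd_ne c a hge] at hcg
        exact hext1.ne_none (hcl g hg hcg fp hpe)
    have hcnt1 : uncolored G c1 + 1 = uncolored G c := upd_uncolored c a hnone hees
    obtain ⟨c', hext, hprop', hcl', hcount⟩ := ih c1 hprop hcl1 (by omega)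
    exact ⟨c', hext1.trans' hext, hprop', hcl', by omega⟩

lemma maker_move {m : ℕ} (hT : G.IsTree) (hΔ : ∀ v : V, (G.incidenceSet v).ncard ≤ Δ)
    (hR : ∀ w, G.dist r w ≤ m + 1) {b : Sym2 V} (c : Sym2 V → Option (Fin (Δ+1)))
    (hc : Proper G c) (hce : ClosedExcept G r c b) :
    ∃ c', Extends c c' ∧ Proper G c' ∧ ClosedC G r c' ∧
      uncolored G c' = uncolored G c - min m (uncolored G c) := by
  have hbd : ∀ i f, iterPe G r (i+1) b = some f → c f = none → i + 1 ≤ m := by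
    intro i f hif _
    obtain ⟨hbes, hfes, hd⟩ := iterPe_elim hT hif
    have h1 : dep G r f ≥ 1 := dep_pos hT hfes
    have h2 : dep G r b ≤ m + 1 := dep_le hT hR hbes
    omega
  obtain ⟨c1, t, htm, hext1, hprop1, hce1, htu, hcnt1, hanc⟩ := phase1 hT hΔ m c hc hce hbd
  have hcl1 : ClosedC G r c1 := by
    intro g hg hcg fp hpe
    by_cases hgb : g = b
    · refine hanc 0 fp ?_
      rw [iterPe_succ, iterPe_zero]
      simpa using hgb ▸ hpe
    · exact hce1 g hg hcg hgb fp hpe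
  have hminu : min m (uncolored G c) ≤ uncolored G c := Nat.min_le_right _ _
  have htmin : t ≤ min m (uncolored G c) := le_min htm htu
  obtain ⟨c', hext, hprop, hcl, hcnt⟩ :=
    phase2 hT hΔ (min m (uncolored G c) - t) c1 hprop1 hcl1 (by omega)
  exact ⟨c', hext1.trans' hext, hprop, hcl, by omega⟩

lemma main_win {m : ℕ} (hT : G.IsTree) (hΔ : ∀ v : V, (G.incidenceSet v).ncard ≤ Δ)
    (hR : ∀ w, G.dist r w ≤ m + 1) (hm : 1 ≤ m) : ∀ u : ℕ,
    (∀ (c : Sym2 V → Option (Fin (Δ+1))) (b : Sym2 V), Proper G c → ClosedExcept G r c b →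
      uncolored G c = u → MakerWins G m (Δ+1) c true) ∧
    (∀ c : Sym2 V → Option (Fin (Δ+1)), Proper G c → ClosedC G r c →
      uncolored G c = u → MakerWins G m (Δ+1) c false) := by
  intro u
  induction u using Nat.strong_induction_on with
  | _ u ih =>
    constructor
    · intro c b hc hce hu
      by_cases hu0 : uncolored G c = 0
      · exact MakerWins.all c true (all_colored hu0)
      · obtain ⟨c', hext, hprop, hcl, hcnt⟩ := maker_move hT hΔ hR c hc hce
        refine MakerWins.maker c c' hu0 hext hprop hcnt ?_
        have hmin : 1 ≤ min m (uncolored G c) := le_min hm (by omega)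
        have hlt : uncolored G c' < u := by rw [hcnt]; omega
        exact (ih _ hlt).2 c' hprop hcl rfl
    · intro c hc hcl hu
      by_cases hu0 : uncolored G c = 0
      · exact MakerWins.all c false (all_colored hu0)
      · refine MakerWins.breaker c hu0 ?_ ?_
        · obtain ⟨c', h1, h2, _, h4⟩ := phase2 hT hΔ 1 c hc hcl (by omega)
          exact ⟨c', h1, h2, h4⟩
        · intro c' hext hprop hcnt
          have hsub : {x | x ∈ G.edgeSet ∧ c' x = none} ⊆ {x | x ∈ G.edgeSet ∧ c x = none} := by
            rintro x ⟨hx, hx'⟩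
            refine ⟨hx, ?_⟩
            by_contra hcx
            obtain ⟨a, ha⟩ := Option.ne_none_iff_exists'.mp hcx
            rw [hext x a ha] at hx'
            exact absurd hx' (by simp)
          have hD : ({x | x ∈ G.edgeSet ∧ c x = none} \
              {x | x ∈ G.edgeSet ∧ c' x = none}).ncard = 1 := by
            rw [Set.ncard_diff hsub (Set.toFinite _)]
            show uncolored G c - uncolored G c' = 1
            omega
          obtain ⟨b, hb⟩ := Set.ncard_eq_one.mp hD
          have hce' : ClosedExcept G r c' b := by
            intro g hg hcg hgb fp hpe
            by_cases hgc : c g = none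
            · exfalso
              apply hgb
              have : g ∈ ({b} : Set (Sym2 V)) := by
                rw [← hb]
                exact ⟨⟨hg, hgc⟩, fun hmem => hcg hmem.2⟩
              simpa using this
            · exact hext.ne_none (hcl g hg hgc fp hpe)
          have hlt : uncolored G c' < u := by omega
          exact (ih _ hlt).1 c' b hprop hce' rfl

end GameSec

end Proof4

end EdgeGame

open EdgeGame SimpleGraph

/-- if m ≥ diam(T) - 2 then χ'_g(T;m,1) ≤ Δ(T) + 1. -/
theorem stmt4 {V : Type*} [Fintype V] (G : SimpleGraph V) [DecidableRel G.Adj]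
    (hT : G.IsTree) (m : ℕ) (hm : 1 ≤ m) (hdiam : G.diam - 2 ≤ m) :
    gameChromIndex G m ≤ G.maxDegree + 1 := by
  classical
  apply Nat.sInf_le
  simp only [Set.mem_setOf_eq]
  have hne : Nonempty V := hT.isConnected.nonempty
  have hΔ : ∀ v : V, (G.incidenceSet v).ncard ≤ G.maxDegree := by
    intro v
    rw [← Nat.card_coe_set_eq, Nat.card_eq_fintype_card, G.card_incidenceSet_eq_degree]
    exact G.degree_le_maxDegree v
  have hetop : G.ediam ≠ ⊤ := by
    obtain ⟨u, v, huv⟩ := G.exists_edist_eq_ediam_of_finite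
    rw [← huv, SimpleGraph.edist_ne_top_iff_reachable]
    exact hT.isConnected u v
  obtain ⟨r, hR⟩ : ∃ r : V, ∀ w, G.dist r w ≤ m + 1 := by
    by_cases hd : G.diam ≤ m + 1
    · exact ⟨Classical.arbitrary V, fun w => le_trans (G.dist_le_diam hetop) hd⟩
    · obtain ⟨r, hr⟩ := tree_center hT (by omega)
      exact ⟨r, fun w => by have := hr w; omega⟩
  exact (main_win hT hΔ hR hm (uncolored G (fun _ => none))).1 _ s(r, r)
    (fun e f he hf hadj a ha => absurd ha (by simp))
    (fun g hg hcg hgb f hpe => absurd rfl hcg)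
    rfl
end

section
/- Let T be a caterpillar with Δ(T) ≥ 4 and let m ≥ 2 be an integer. Then the (m,1)-game chromatic index of T equals Δ(T). -/
set_option linter.unusedSectionVars false

open EdgeGame SimpleGraph Finset

namespace CatProof

open scoped Classical

variable {V : Type*} [Fintype V] (G : SimpleGraph V) [DecidableRel G.Adj]

lemma eadj_symm {e f : Sym2 V} (h : EAdj e f) : EAdj f e :=
  ⟨h.1.symm, let ⟨v, hv⟩ := h.2; ⟨v, hv.2, hv.1⟩⟩

noncomputable def UF {k : ℕ} (c : Sym2 V → Option (Fin k)) : Finset (Sym2 V) :=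
  G.edgeFinset.filter (fun e => c e = none)

lemma mem_UF {k : ℕ} {c : Sym2 V → Option (Fin k)} {e : Sym2 V} :
    e ∈ UF G c ↔ e ∈ G.edgeSet ∧ c e = none := by
  simp [UF, mem_edgeFinset]

lemma uncolored_eq {k : ℕ} (c : Sym2 V → Option (Fin k)) :
    uncolored G c = (UF G c).card := by
  have h : {e | e ∈ G.edgeSet ∧ c e = none} = ↑(UF G c) := by
    ext e; simp [mem_UF]
  rw [uncolored, h, Set.ncard_coe_finset]

/-- An edge all of whose endpoints have degree at least two. -/
def Spine (e : Sym2 V) : Prop := ∀ v ∈ e, 2 ≤ G.degree v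

/-- Colored edges adjacent to `e`. -/
noncomputable def CA {k : ℕ} (c : Sym2 V → Option (Fin k)) (e : Sym2 V) : Finset (Sym2 V) :=
  G.edgeFinset.filter (fun f => EAdj e f ∧ c f ≠ none)

noncomputable def spineAt (a : V) : Finset (Sym2 V) :=
  G.edgeFinset.filter (fun e => Spine G e ∧ a ∈ e)

/-- One greedy coloring step. -/
lemma step {k : ℕ} {c : Sym2 V → Option (Fin k)} (hprop : Proper G c)
    {e : Sym2 V} (he : e ∈ G.edgeSet) (hun : c e = none) (hlt : (CA G c e).card < k) :
    ∃ a, Proper G (Function.update c e (some a)) ∧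
      Extends c (Function.update c e (some a)) ∧
      UF G (Function.update c e (some a)) = (UF G c).erase e := by
  classical
  set F := (CA G c e).biUnion (fun f => (c f).toFinset) with hF
  have hcardF : F.card < k := by
    calc F.card ≤ ∑ f ∈ CA G c e, (c f).toFinset.card := Finset.card_biUnion_le
    _ ≤ ∑ _f ∈ CA G c e, 1 := Finset.sum_le_sum (by intro f _; cases c f <;> simp)
    _ = (CA G c e).card := by simp
    _ < k := hlt
  have hex : ∃ a : Fin k, a ∉ F := by
    by_contra h
    push_neg at h
    have h2 : (Finset.univ : Finset (Fin k)).card ≤ F.card :=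
      Finset.card_le_card (fun a _ => h a)
    simp at h2; omega
  obtain ⟨a, ha⟩ := hex
  have hmemF : ∀ f, f ∈ G.edgeSet → EAdj e f → ∀ b, c f = some b → b ∈ F := by
    intro f hf hadj b hb
    apply Finset.mem_biUnion.2
    refine ⟨f, ?_, by simp [hb]⟩
    simp only [CA, Finset.mem_filter, mem_edgeFinset]
    exact ⟨hf, hadj, by simp [hb]⟩
  refine ⟨a, ?_, ?_, ?_⟩
  · intro f₁ f₂ h1 h2 hadj b hb
    by_cases h1e : f₁ = e
    · have h2e : f₂ ≠ e := fun h => hadj.1 (h1e.trans h.symm)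
      rw [h1e, Function.update_self] at hb
      rw [Function.update_of_ne h2e]
      intro hc2
      have hadj' : EAdj e f₂ := h1e ▸ hadj
      have hab : a = b := by injection hb
      exact absurd (hmemF f₂ h2 hadj' b hc2) (hab ▸ ha)
    · rw [Function.update_of_ne h1e] at hb
      by_cases h2e : f₂ = e
      · have hadj' : EAdj e f₁ := h2e ▸ eadj_symm hadj
        rw [h2e, Function.update_self]
        intro hc2
        have hbF : b ∈ F := hmemF f₁ h1 hadj' b hb
        have hab : a = b := by injection hc2
        exact absurd hbF (hab ▸ ha)
      · rw [Function.update_of_ne h2e]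
        exact hprop f₁ f₂ h1 h2 hadj b hb
  · intro f b hfb
    have hfe : f ≠ e := by intro h; rw [h, hun] at hfb; cases hfb
    rw [Function.update_of_ne hfe]; exact hfb
  · ext f
    by_cases hfe : f = e
    · subst hfe
      simp [mem_UF, Function.update_self]
    · simp [mem_UF, Function.update_of_ne hfe, Finset.mem_erase, hfe]

/-- At a vertex of degree ≤ 1, the only incident edge is the given one. -/
lemma leaf_unique {a b : V} (hab : G.Adj a b) (hb : G.degree b ≤ 1) :
    ∀ f ∈ G.edgeSet, b ∈ f → f = s(a, b) := by
  classical
  intro f hf hbf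
  have h1 : f ∈ G.incidenceFinset b := by
    rw [mem_incidenceFinset]; exact ⟨hf, hbf⟩
  have h2 : s(a, b) ∈ G.incidenceFinset b := by
    rw [mem_incidenceFinset]; exact ⟨(G.mem_edgeSet).mpr hab, by simp⟩
  have hc : (G.incidenceFinset b).card ≤ 1 := by
    rw [G.card_incidenceFinset_eq_degree]; exact hb
  exact Finset.card_le_one.mp hc f h1 _ h2

lemma CA_lt_of_pendant_aux {k : ℕ} (c : Sym2 V → Option (Fin k)) {a b : V}
    (hab : G.Adj a b) (hb : G.degree b ≤ 1)
    (hk : G.maxDegree ≤ k) (hk1 : 1 ≤ k) : (CA G c s(a, b)).card < k := by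
  classical
  have hsub : CA G c s(a, b) ⊆ (G.incidenceFinset a).erase s(a, b) := by
    intro f hf
    simp only [CA, Finset.mem_filter, mem_edgeFinset] at hf
    obtain ⟨hfE, ⟨hne, v, hve, hvf⟩, -⟩ := hf
    rcases Sym2.mem_iff.mp hve with rfl | rfl
    · refine Finset.mem_erase.2 ⟨fun h => hne h.symm, ?_⟩
      rw [mem_incidenceFinset]; exact ⟨hfE, hvf⟩
    · exact absurd (leaf_unique G hab hb f hfE hvf) (fun h => hne h.symm)
  have h1 := Finset.card_le_card hsub
  rw [Finset.card_erase_of_mem (by rw [mem_incidenceFinset]; exact ⟨(G.mem_edgeSet).mpr hab, by simp⟩),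
    G.card_incidenceFinset_eq_degree] at h1
  have hda : G.degree a ≤ k := le_trans (G.degree_le_maxDegree a) hk
  omega

lemma CA_lt_pendant {k : ℕ} (c : Sym2 V → Option (Fin k)) {e : Sym2 V}
    (he : e ∈ G.edgeSet) (hns : ¬ Spine G e)
    (hk : G.maxDegree ≤ k) (hk1 : 1 ≤ k) : (CA G c e).card < k := by
  revert he hns
  refine Sym2.inductionOn e ?_
  intro x y he hns
  simp only [Spine, not_forall] at hns
  obtain ⟨v, hv, hdv⟩ := hns
  have hdv' : G.degree v ≤ 1 := by omega
  rcases Sym2.mem_iff.mp hv with rfl | rfl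
  · rw [Sym2.eq_swap]
    exact CA_lt_of_pendant_aux G c ((G.mem_edgeSet).mp he).symm hdv' hk hk1
  · exact CA_lt_of_pendant_aux G c ((G.mem_edgeSet).mp he) hdv' hk hk1

section PathLemmas

lemma mem_support_of_mem_edge {u v a : V} (p : G.Walk u v) {e : Sym2 V}
    (he : e ∈ p.edges) (ha : a ∈ e) : a ∈ p.support := by
  revert he ha
  refine Sym2.inductionOn e ?_
  intro x y he ha
  rcases Sym2.mem_iff.mp ha with rfl | rfl
  · exact p.fst_mem_support_of_mem_edges he
  · exact p.snd_mem_support_of_mem_edges he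

lemma start_edges_unique {a v : V} (q : G.Walk a v) (hq : q.IsPath) :
    ∀ e ∈ q.edges, a ∈ e → ∀ f ∈ q.edges, a ∈ f → e = f := by
  cases q with
  | nil => simp
  | @cons _ w _ h q' =>
    intro e he hae f hf haf
    rw [SimpleGraph.Walk.cons_isPath_iff] at hq
    rw [SimpleGraph.Walk.edges_cons, List.mem_cons] at he hf
    have hnot : ∀ x ∈ q'.edges, a ∉ x := fun x hx hax =>
      hq.2 (mem_support_of_mem_edge G q' hx hax)
    rcases he with rfl | he
    · rcases hf with rfl | hf
      · rfl
      · exact absurd haf (hnot f hf)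
    · exact absurd hae (hnot e he)

lemma path_edges_at {u v : V} (p : G.Walk u v) (hp : p.IsPath) (a : V) :
    ((p.edges.toFinset).filter (fun e => a ∈ e)).card ≤ 2 := by
  classical
  by_cases ha : a ∈ p.support
  · have hspec := p.take_spec ha
    have hsub : (p.edges.toFinset).filter (fun e => a ∈ e) ⊆
        (((p.takeUntil a ha).edges.toFinset).filter (fun e => a ∈ e)) ∪
        (((p.dropUntil a ha).edges.toFinset).filter (fun e => a ∈ e)) := by
      intro e he
      simp only [Finset.mem_filter, List.mem_toFinset, Finset.mem_union] at he ⊢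
      obtain ⟨he1, he2⟩ := he
      rw [← hspec, SimpleGraph.Walk.edges_append, List.mem_append] at he1
      tauto
    refine le_trans (Finset.card_le_card hsub) (le_trans (Finset.card_union_le _ _) ?_)
    have h1 : (((p.takeUntil a ha).edges.toFinset).filter (fun e => a ∈ e)).card ≤ 1 := by
      rw [Finset.card_le_one]
      intro e he f hf
      simp only [Finset.mem_filter, List.mem_toFinset] at he hf
      have hrev : ∀ x, x ∈ (p.takeUntil a ha).edges → x ∈ (p.takeUntil a ha).reverse.edges := by
        intro x hx
        rw [SimpleGraph.Walk.edges_reverse, List.mem_reverse]; exact hx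
      exact start_edges_unique G (p.takeUntil a ha).reverse ((hp.takeUntil ha).reverse)
        e (hrev e he.1) he.2 f (hrev f hf.1) hf.2
    have h2 : (((p.dropUntil a ha).edges.toFinset).filter (fun e => a ∈ e)).card ≤ 1 := by
      rw [Finset.card_le_one]
      intro e he f hf
      simp only [Finset.mem_filter, List.mem_toFinset] at he hf
      exact start_edges_unique G (p.dropUntil a ha) (hp.dropUntil ha) e he.1 he.2 f hf.1 hf.2
    omega
  · have : (p.edges.toFinset).filter (fun e => a ∈ e) = ∅ := by
      rw [Finset.eq_empty_iff_forall_notMem]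
      intro e he
      simp only [Finset.mem_filter, List.mem_toFinset] at he
      exact ha (mem_support_of_mem_edge G p he.1 he.2)
    rw [this]; simp

lemma adj_mem_path_edges (ht : G.IsTree) {u v : V} (p : G.Walk u v) (hp : p.IsPath)
    {a b : V} (ha : a ∈ p.support) (hb : b ∈ p.support) (hab : G.Adj a b) :
    s(a, b) ∈ p.edges := by
  classical
  have hsingle : ∀ (q : G.Walk a b), q.IsPath → q = SimpleGraph.Walk.cons hab SimpleGraph.Walk.nil := by
    intro q hq
    have h2 : (SimpleGraph.Walk.cons hab SimpleGraph.Walk.nil).IsPath := by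
      simp [SimpleGraph.Walk.cons_isPath_iff, hab.ne]
    have := isAcyclic_iff_path_unique.mp ht.IsAcyclic (⟨q, hq⟩ : G.Path a b) ⟨_, h2⟩
    exact congrArg Subtype.val this
  have hb' : b ∈ ((p.takeUntil a ha).append (p.dropUntil a ha)).support := by
    rw [p.take_spec ha]; exact hb
  rw [SimpleGraph.Walk.mem_support_append_iff] at hb'
  rcases hb' with hb1 | hb2
  · have hrev : b ∈ (p.takeUntil a ha).reverse.support := by
      rw [SimpleGraph.Walk.support_reverse, List.mem_reverse]; exact hb1
    have hq : ((p.takeUntil a ha).reverse.takeUntil b hrev).IsPath :=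
      ((hp.takeUntil ha).reverse).takeUntil hrev
    have heq := hsingle _ hq
    have hmem : s(a, b) ∈ (p.takeUntil a ha).reverse.edges := by
      apply SimpleGraph.Walk.edges_takeUntil_subset _ hrev
      rw [heq]; simp
    rw [SimpleGraph.Walk.edges_reverse, List.mem_reverse] at hmem
    exact SimpleGraph.Walk.edges_takeUntil_subset p ha hmem
  · have hq : ((p.dropUntil a ha).takeUntil b hb2).IsPath :=
      (hp.dropUntil ha).takeUntil hb2
    have heq := hsingle _ hq
    have hmem : s(a, b) ∈ (p.dropUntil a ha).edges := by
      apply SimpleGraph.Walk.edges_takeUntil_subset _ hb2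
      rw [heq]; simp
    exact SimpleGraph.Walk.edges_dropUntil_subset p ha hmem

lemma spineAt_card_le (hC : IsCaterpillar G) (a : V) : (spineAt G a).card ≤ 2 := by
  classical
  obtain ⟨ht, u, v, p, hp, hsup⟩ := hC
  have hsub : spineAt G a ⊆ (p.edges.toFinset).filter (fun e => a ∈ e) := by
    intro e he
    simp only [spineAt, Finset.mem_filter, mem_edgeFinset] at he
    obtain ⟨heE, hspine, hae⟩ := he
    simp only [Finset.mem_filter, List.mem_toFinset]
    refine ⟨?_, hae⟩
    revert heE hspine
    refine Sym2.inductionOn e ?_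
    intro x y hxy hdeg
    exact adj_mem_path_edges G ht p hp ((hsup x).mpr (hdeg x (by simp)))
      ((hsup y).mpr (hdeg y (by simp))) ((G.mem_edgeSet).mp hxy)
  exact le_trans (Finset.card_le_card hsub) (path_edges_at G p hp a)

end PathLemmas

lemma adjSpine_card_le (hC : IsCaterpillar G) {g : Sym2 V} (hg : g ∈ G.edgeSet) :
    (G.edgeFinset.filter (fun e => Spine G e ∧ EAdj e g)).card ≤ 2 := by
  classical
  revert hg
  refine Sym2.inductionOn g ?_
  intro a b hg
  by_cases ha : 2 ≤ G.degree a
  · by_cases hb : 2 ≤ G.degree b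
    · have hgs : Spine G s(a, b) := by
        intro v hv; rcases Sym2.mem_iff.mp hv with rfl | rfl; exacts [ha, hb]
      have hga : s(a, b) ∈ spineAt G a := by
        simp only [spineAt, Finset.mem_filter, mem_edgeFinset]
        exact ⟨hg, hgs, by simp⟩
      have hgb : s(a, b) ∈ spineAt G b := by
        simp only [spineAt, Finset.mem_filter, mem_edgeFinset]
        exact ⟨hg, hgs, by simp⟩
      have hsub : G.edgeFinset.filter (fun e => Spine G e ∧ EAdj e s(a, b)) ⊆
          (spineAt G a).erase s(a, b) ∪ (spineAt G b).erase s(a, b) := by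
        intro f hf
        simp only [Finset.mem_filter, mem_edgeFinset] at hf
        obtain ⟨hfE, hfs, hne, w, hwf, hwg⟩ := hf
        have hmem : ∀ x, w = x → f ∈ (spineAt G x).erase s(a, b) := by
          intro x hx
          refine Finset.mem_erase.2 ⟨hne, ?_⟩
          simp only [spineAt, Finset.mem_filter, mem_edgeFinset]
          exact ⟨hfE, hfs, hx ▸ hwf⟩
        rcases Sym2.mem_iff.mp hwg with rfl | rfl
        · exact Finset.mem_union_left _ (hmem _ rfl)
        · exact Finset.mem_union_right _ (hmem _ rfl)
      refine le_trans (Finset.card_le_card hsub) (le_trans (Finset.card_union_le _ _) ?_)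
      have h1 := Finset.card_erase_of_mem hga
      have h2 := Finset.card_erase_of_mem hgb
      have h3 := spineAt_card_le G hC a
      have h4 := spineAt_card_le G hC b
      omega
    · have hsub : G.edgeFinset.filter (fun e => Spine G e ∧ EAdj e s(a, b)) ⊆ spineAt G a := by
        intro f hf
        simp only [Finset.mem_filter, mem_edgeFinset] at hf
        obtain ⟨hfE, hfs, hne, w, hwf, hwg⟩ := hf
        simp only [spineAt, Finset.mem_filter, mem_edgeFinset]
        rcases Sym2.mem_iff.mp hwg with rfl | rfl
        · exact ⟨hfE, hfs, hwf⟩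
        · exact absurd (hfs w hwf) hb
      exact le_trans (Finset.card_le_card hsub) (spineAt_card_le G hC a)
  · have hsub : G.edgeFinset.filter (fun e => Spine G e ∧ EAdj e s(a, b)) ⊆ spineAt G b := by
      intro f hf
      simp only [Finset.mem_filter, mem_edgeFinset] at hf
      obtain ⟨hfE, hfs, hne, w, hwf, hwg⟩ := hf
      simp only [spineAt, Finset.mem_filter, mem_edgeFinset]
      rcases Sym2.mem_iff.mp hwg with rfl | rfl
      · exact absurd (hfs w hwf) ha
      · exact ⟨hfE, hfs, hwf⟩
    exact le_trans (Finset.card_le_card hsub) (spineAt_card_le G hC b)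

lemma CA_le_three (hC : IsCaterpillar G) {k : ℕ} {c : Sym2 V → Option (Fin k)} {g e : Sym2 V}
    (he : e ∈ G.edgeSet) (hs : Spine G e)
    (hBI : ∀ f ∈ G.edgeSet, ¬ Spine G f → EAdj e f → c f ≠ none → f = g) :
    (CA G c e).card ≤ 3 := by
  classical
  revert he hs hBI
  refine Sym2.inductionOn e ?_
  intro a b he hs hBI
  have hga : s(a, b) ∈ spineAt G a := by
    simp only [spineAt, Finset.mem_filter, mem_edgeFinset]
    exact ⟨he, hs, by simp⟩
  have hgb : s(a, b) ∈ spineAt G b := by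
    simp only [spineAt, Finset.mem_filter, mem_edgeFinset]
    exact ⟨he, hs, by simp⟩
  have hsub : CA G c s(a, b) ⊆
      ((spineAt G a).erase s(a, b) ∪ (spineAt G b).erase s(a, b)) ∪ {g} := by
    intro f hf
    simp only [CA, Finset.mem_filter, mem_edgeFinset] at hf
    obtain ⟨hfE, hadj, hcf⟩ := hf
    by_cases hfs : Spine G f
    · obtain ⟨hne, w, hwe, hwf⟩ := hadj
      apply Finset.mem_union_left
      have hmem : ∀ x, w = x → f ∈ (spineAt G x).erase s(a, b) := by
        intro x hx
        refine Finset.mem_erase.2 ⟨fun hh => hne hh.symm, ?_⟩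
        simp only [spineAt, Finset.mem_filter, mem_edgeFinset]
        exact ⟨hfE, hfs, hx ▸ hwf⟩
      rcases Sym2.mem_iff.mp hwe with rfl | rfl
      · exact Finset.mem_union_left _ (hmem _ rfl)
      · exact Finset.mem_union_right _ (hmem _ rfl)
    · apply Finset.mem_union_right
      simp [hBI f hfE hfs hadj hcf]
  refine le_trans (Finset.card_le_card hsub) (le_trans (Finset.card_union_le _ _) ?_)
  have h5 := Finset.card_union_le ((spineAt G a).erase s(a, b)) ((spineAt G b).erase s(a, b))
  have h1 := Finset.card_erase_of_mem hga
  have h2 := Finset.card_erase_of_mem hgb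
  have h3 := spineAt_card_le G hC a
  have h4 := spineAt_card_le G hC b
  have h6 : ({g} : Finset (Sym2 V)).card = 1 := Finset.card_singleton g
  omega

def BInv {k : ℕ} (c : Sym2 V → Option (Fin k)) (g : Sym2 V) : Prop :=
  ∀ e ∈ G.edgeSet, c e = none → Spine G e →
    ∀ f ∈ G.edgeSet, ¬ Spine G f → EAdj e f → c f ≠ none → f = g

noncomputable def W {k : ℕ} (c : Sym2 V → Option (Fin k)) (g : Sym2 V) : Finset (Sym2 V) :=
  (UF G c).filter (fun e => Spine G e ∧ EAdj e g ∧ ¬ Spine G g ∧ c g ≠ none)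

def Inv {k : ℕ} (c : Sym2 V → Option (Fin k)) : Prop :=
  ∀ e ∈ G.edgeSet, c e = none → Spine G e →
    ∀ f ∈ G.edgeSet, ¬ Spine G f → EAdj e f → c f = none

lemma inv_of {k : ℕ} {c : Sym2 V → Option (Fin k)} {g : Sym2 V}
    (hBI : BInv G c g) (hW : W G c g = ∅) : Inv G c := by
  intro e heE heU hs f hfE hfns hadj
  by_contra hcf
  have hfg : f = g := hBI e heE heU hs f hfE hfns hadj hcf
  subst hfg
  have hmem : e ∈ W G c f := by
    simp only [W, Finset.mem_filter, mem_UF]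
    exact ⟨⟨heE, heU⟩, hs, hadj, hfns, hcf⟩
  rw [hW] at hmem
  simp at hmem

lemma makerSteps (hC : IsCaterpillar G) {k : ℕ} (hk4 : 4 ≤ k) (hkd : G.maxDegree ≤ k) :
    ∀ (j : ℕ) (c : Sym2 V → Option (Fin k)) (g : Sym2 V), Proper G c → BInv G c g →
      (W G c g).card ≤ j → j ≤ (UF G c).card →
      ∃ c', Extends c c' ∧ Proper G c' ∧ (UF G c').card = (UF G c).card - j ∧
        BInv G c' g ∧ W G c' g = ∅ := by
  intro j
  induction j with
  | zero =>
    intro c g hp hBI hW _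
    refine ⟨c, fun _ _ h => h, hp, by simp, hBI, ?_⟩
    exact Finset.card_eq_zero.mp (le_antisymm hW (Nat.zero_le _))
  | succ j ih =>
    intro c g hp hBI hW hle
    by_cases hWne : (W G c g).Nonempty
    · -- color a spine edge adjacent to the violator g
      obtain ⟨e, heW⟩ := hWne
      have heW' := heW
      simp only [W, Finset.mem_filter, mem_UF] at heW'
      obtain ⟨⟨heE, heU⟩, hes, heg, hgns, hgc⟩ := heW'
      have hlt : (CA G c e).card < k := by
        have := CA_le_three G hC (c := c) (g := g) heE hes
          (fun f hf hns hadj hcf => hBI e heE heU hes f hf hns hadj hcf)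
        omega
      obtain ⟨A, hpA, hextA, hUFA⟩ := step G hp heE heU hlt
      set c₁ := Function.update c e (some A) with hc₁
      have hge : g ≠ e := fun h => hgns (h ▸ hes)
      have hcard₁ : (UF G c₁).card = (UF G c).card - 1 := by
        rw [hUFA, Finset.card_erase_of_mem ((mem_UF G).mpr ⟨heE, heU⟩)]
      have hBI₁ : BInv G c₁ g := by
        intro e' he'E he'U hs' f hfE hfns hadj hcf
        have hfe : f ≠ e := fun h => hfns (h ▸ hes)
        have he'e : e' ≠ e := by
          intro h; rw [h, hc₁, Function.update_self] at he'U; cases he'U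
        rw [hc₁, Function.update_of_ne hfe] at hcf
        rw [hc₁, Function.update_of_ne he'e] at he'U
        exact hBI e' he'E he'U hs' f hfE hfns hadj hcf
      have hW₁ : W G c₁ g ⊆ (W G c g).erase e := by
        intro x hx
        simp only [W, Finset.mem_filter, mem_UF] at hx
        obtain ⟨⟨hxE, hxU⟩, hxs, hxg, hxgns, hxgc⟩ := hx
        have hxe : x ≠ e := by
          intro h; rw [h, hc₁, Function.update_self] at hxU; cases hxU
        rw [hc₁, Function.update_of_ne hxe] at hxU
        rw [hc₁, Function.update_of_ne hge] at hxgc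
        refine Finset.mem_erase.2 ⟨hxe, ?_⟩
        simp only [W, Finset.mem_filter, mem_UF]
        exact ⟨⟨hxE, hxU⟩, hxs, hxg, hxgns, hxgc⟩
      have hWcard : (W G c₁ g).card ≤ j := by
        have := Finset.card_le_card hW₁
        rw [Finset.card_erase_of_mem heW] at this
        omega
      obtain ⟨c₂, hext₂, hp₂, hcard₂, hBI₂, hW₂⟩ :=
        ih c₁ g hpA hBI₁ hWcard (by omega)
      refine ⟨c₂, fun x a h => hext₂ x a (hextA x a h), hp₂, ?_, hBI₂, hW₂⟩
      rw [hcard₂, hcard₁]; omega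
    · rw [Finset.not_nonempty_iff_eq_empty] at hWne
      by_cases hSne : ((UF G c).filter (fun e => Spine G e)).Nonempty
      · -- color any uncolored spine edge
        obtain ⟨e, heS⟩ := hSne
        simp only [Finset.mem_filter, mem_UF] at heS
        obtain ⟨⟨heE, heU⟩, hes⟩ := heS
        have hlt : (CA G c e).card < k := by
          have := CA_le_three G hC (c := c) (g := g) heE hes
            (fun f hf hns hadj hcf => hBI e heE heU hes f hf hns hadj hcf)
          omega
        obtain ⟨A, hpA, hextA, hUFA⟩ := step G hp heE heU hlt
        set c₁ := Function.update c e (some A) with hc₁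
        have hcard₁ : (UF G c₁).card = (UF G c).card - 1 := by
          rw [hUFA, Finset.card_erase_of_mem ((mem_UF G).mpr ⟨heE, heU⟩)]
        have hBI₁ : BInv G c₁ g := by
          intro e' he'E he'U hs' f hfE hfns hadj hcf
          have hfe : f ≠ e := fun h => hfns (h ▸ hes)
          have he'e : e' ≠ e := by
            intro h; rw [h, hc₁, Function.update_self] at he'U; cases he'U
          rw [hc₁, Function.update_of_ne hfe] at hcf
          rw [hc₁, Function.update_of_ne he'e] at he'U
          exact hBI e' he'E he'U hs' f hfE hfns hadj hcf
        have hW₁ : W G c₁ g = ∅ := by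
          rw [Finset.eq_empty_iff_forall_notMem]
          intro x hx
          simp only [W, Finset.mem_filter, mem_UF] at hx
          obtain ⟨⟨hxE, hxU⟩, hxs, hxg, hxgns, hxgc⟩ := hx
          have hge : g ≠ e := fun h => hxgns (h ▸ hes)
          have hxe : x ≠ e := by
            intro h; rw [h, hc₁, Function.update_self] at hxU; cases hxU
          rw [hc₁, Function.update_of_ne hxe] at hxU
          rw [hc₁, Function.update_of_ne hge] at hxgc
          have : x ∈ W G c g := by
            simp only [W, Finset.mem_filter, mem_UF]
            exact ⟨⟨hxE, hxU⟩, hxs, hxg, hxgns, hxgc⟩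
          rw [hWne] at this; simp at this
        obtain ⟨c₂, hext₂, hp₂, hcard₂, hBI₂, hW₂⟩ :=
          ih c₁ g hpA hBI₁ (by rw [hW₁]; simp) (by omega)
        refine ⟨c₂, fun x a h => hext₂ x a (hextA x a h), hp₂, ?_, hBI₂, hW₂⟩
        rw [hcard₂, hcard₁]; omega
      · -- no uncolored spine edges: color any uncolored (pendant) edge
        rw [Finset.not_nonempty_iff_eq_empty] at hSne
        have hnospine : ∀ x ∈ UF G c, ¬ Spine G x := by
          intro x hx hxs
          have : x ∈ (UF G c).filter (fun e => Spine G e) := Finset.mem_filter.2 ⟨hx, hxs⟩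
          rw [hSne] at this; simp at this
        obtain ⟨e, he⟩ := Finset.card_pos.mp (by omega : 0 < (UF G c).card)
        obtain ⟨heE, heU⟩ := (mem_UF G).mp he
        have hlt : (CA G c e).card < k :=
          CA_lt_pendant G c heE (hnospine e he) hkd (by omega)
        obtain ⟨A, hpA, hextA, hUFA⟩ := step G hp heE heU hlt
        set c₁ := Function.update c e (some A) with hc₁
        have hcard₁ : (UF G c₁).card = (UF G c).card - 1 := by
          rw [hUFA, Finset.card_erase_of_mem he]
        have hUF₁sub : UF G c₁ ⊆ UF G c := by
          rw [hUFA]; exact Finset.erase_subset _ _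
        have hBI₁ : BInv G c₁ g := by
          intro e' he'E he'U hs' f hfE hfns hadj hcf
          have he'e : e' ≠ e := by
            intro h; rw [h, hc₁, Function.update_self] at he'U; cases he'U
          rw [hc₁, Function.update_of_ne he'e] at he'U
          exact absurd hs' (hnospine e' ((mem_UF G).mpr ⟨he'E, he'U⟩))
        have hW₁ : W G c₁ g = ∅ := by
          rw [Finset.eq_empty_iff_forall_notMem]
          intro x hx
          simp only [W, Finset.mem_filter, mem_UF] at hx
          obtain ⟨⟨hxE, hxU⟩, hxs, _⟩ := hx
          have hxe : x ≠ e := by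
            intro h; rw [h, hc₁, Function.update_self] at hxU; cases hxU
          rw [hc₁, Function.update_of_ne hxe] at hxU
          exact hnospine x ((mem_UF G).mpr ⟨hxE, hxU⟩) hxs
        obtain ⟨c₂, hext₂, hp₂, hcard₂, hBI₂, hW₂⟩ :=
          ih c₁ g hpA hBI₁ (by rw [hW₁]; simp) (by omega)
        refine ⟨c₂, fun x a h => hext₂ x a (hextA x a h), hp₂, ?_, hBI₂, hW₂⟩
        rw [hcard₂, hcard₁]; omega

lemma breakerStep (hC : IsCaterpillar G) {k : ℕ} {c c' : Sym2 V → Option (Fin k)}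
    (hInv : Inv G c) (hext : Extends c c')
    (hcnt : (UF G c').card + 1 = (UF G c).card) :
    ∃ g, BInv G c' g ∧ (W G c' g).card ≤ 2 := by
  classical
  have hsub : UF G c' ⊆ UF G c := by
    intro e he
    rw [mem_UF] at he ⊢
    refine ⟨he.1, ?_⟩
    cases hce : c e with
    | none => rfl
    | some a => rw [hext e a hce] at he; exact absurd he.2 (by simp)
  have hdiff : ((UF G c) \ (UF G c')).card = 1 := by
    rw [Finset.card_sdiff_of_subset hsub]; omega
  obtain ⟨g, hg⟩ := Finset.card_eq_one.mp hdiff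
  have hgmem : g ∈ (UF G c) \ (UF G c') := by rw [hg]; simp
  rw [Finset.mem_sdiff] at hgmem
  obtain ⟨hgU, hgU'⟩ := hgmem
  obtain ⟨hgE, hgc⟩ := (mem_UF G).mp hgU
  have hgc' : c' g ≠ none := by
    intro h; exact hgU' ((mem_UF G).mpr ⟨hgE, h⟩)
  refine ⟨g, ?_, ?_⟩
  · intro e heE heU' hs f hfE hfns hadj hcf'
    have heU : c e = none := ((mem_UF G).mp (hsub ((mem_UF G).mpr ⟨heE, heU'⟩))).2
    have hcf : c f = none := hInv e heE heU hs f hfE hfns hadj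
    have : f ∈ (UF G c) \ (UF G c') := by
      rw [Finset.mem_sdiff, mem_UF, mem_UF]
      exact ⟨⟨hfE, hcf⟩, fun h => hcf' h.2⟩
    rw [hg, Finset.mem_singleton] at this
    exact this
  · by_cases hgs : Spine G g
    · have : W G c' g = ∅ := by
        rw [Finset.eq_empty_iff_forall_notMem]
        intro x hx
        simp only [W, Finset.mem_filter] at hx
        exact hx.2.2.2.1 hgs
      rw [this]; simp
    · have hsub2 : W G c' g ⊆ G.edgeFinset.filter (fun e => Spine G e ∧ EAdj e g) := by
        intro x hx
        simp only [W, Finset.mem_filter, mem_UF] at hx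
        simp only [Finset.mem_filter, mem_edgeFinset]
        exact ⟨hx.1.1, hx.2.1, hx.2.2.1⟩
      exact le_trans (Finset.card_le_card hsub2) (adjSpine_card_le G hC hgE)

lemma master (hC : IsCaterpillar G) {k : ℕ} (hk4 : 4 ≤ k) (hkd : G.maxDegree ≤ k)
    {m : ℕ} (hm : 2 ≤ m) :
    ∀ (n : ℕ) (c : Sym2 V → Option (Fin k)) (g : Sym2 V), (UF G c).card ≤ n →
      Proper G c → BInv G c g → (W G c g).card ≤ min m (UF G c).card →
      MakerWins G m k c true := by
  intro n
  induction n with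
  | zero =>
    intro c g h0 _ _ _
    refine MakerWins.all c true (fun e he hce => ?_)
    have h1 : e ∈ UF G c := (mem_UF G).mpr ⟨he, hce⟩
    have h2 := Finset.card_pos.mpr ⟨e, h1⟩
    omega
  | succ n ih =>
    intro c g hn hp hBI hW
    by_cases h0 : (UF G c).card = 0
    · refine MakerWins.all c true (fun e he hce => ?_)
      have h1 : e ∈ UF G c := (mem_UF G).mpr ⟨he, hce⟩
      have h2 := Finset.card_pos.mpr ⟨e, h1⟩
      omega
    · obtain ⟨c', hext, hp', hcard, hBI', hW'⟩ :=
        makerSteps G hC hk4 hkd (min m (UF G c).card) c g hp hBI hW (min_le_right _ _)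
      have hInv' : Inv G c' := inv_of G hBI' hW'
      have hmin1 : 1 ≤ min m (UF G c).card := le_min (by omega) (by omega)
      refine MakerWins.maker c c' ?_ hext hp' ?_ ?_
      · rw [uncolored_eq]; exact h0
      · rw [uncolored_eq, uncolored_eq, hcard]
      · by_cases h0' : (UF G c').card = 0
        · refine MakerWins.all c' false (fun e he hce => ?_)
          have h1 : e ∈ UF G c' := (mem_UF G).mpr ⟨he, hce⟩
          have h2 := Finset.card_pos.mpr ⟨e, h1⟩
          omega
        · have hcanex : ∃ c'', Extends c' c'' ∧ Proper G c'' ∧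
              uncolored G c'' + 1 = uncolored G c' := by
            obtain ⟨e, he⟩ := Finset.card_pos.mp (by omega : 0 < (UF G c').card)
            obtain ⟨heE, heU⟩ := (mem_UF G).mp he
            have hlt : (CA G c' e).card < k := by
              by_cases hs : Spine G e
              · have h3 : (CA G c' e).card ≤ 3 :=
                  CA_le_three G hC (g := e) heE hs
                    (fun f hf hns hadj hcf => (hcf (hInv' e heE heU hs f hf hns hadj)).elim)
                omega
              · exact CA_lt_pendant G c' heE hs hkd (by omega)
            obtain ⟨A, hpA, hextA, hUFA⟩ := step G hp' heE heU hlt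
            refine ⟨_, hextA, hpA, ?_⟩
            rw [uncolored_eq, uncolored_eq, hUFA, Finset.card_erase_of_mem he]
            omega
          refine MakerWins.breaker c' (by rw [uncolored_eq]; exact h0') hcanex ?_
          intro c'' hext'' hp'' hcnt''
          rw [uncolored_eq, uncolored_eq] at hcnt''
          obtain ⟨g', hBI'', hW2⟩ := breakerStep G hC hInv' hext'' hcnt''
          have hW2' : (W G c'' g').card ≤ min m (UF G c'').card := by
            refine le_min (le_trans hW2 hm) ?_
            exact Finset.card_filter_le _ _
          exact ih c'' g' (by omega) hp'' hBI'' hW2'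

lemma extract : ∀ {k m : ℕ} {c : Sym2 V → Option (Fin k)} {b : Bool},
    MakerWins G m k c b → Proper G c →
    ∃ c' : Sym2 V → Option (Fin k), Proper G c' ∧ ∀ e ∈ G.edgeSet, c' e ≠ none := by
  intro k m c b h
  induction h with
  | all c b hall => exact fun hp => ⟨c, hp, hall⟩
  | maker c c' hne hext hprop hcount hnext ih => exact fun _ => ih hprop
  | breaker c hne hcan h ih =>
    intro _
    obtain ⟨c', he, hpr, hcnt⟩ := hcan
    exact ih c' he hpr hcnt hpr

lemma degree_le_colors {k : ℕ} {c : Sym2 V → Option (Fin k)} (hp : Proper G c)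
    (htot : ∀ e ∈ G.edgeSet, c e ≠ none) (v : V) : G.degree v ≤ k := by
  classical
  have hmaps : ∀ e ∈ G.incidenceFinset v, c e ∈ (Finset.univ.erase (none : Option (Fin k))) := by
    intro e he
    rw [mem_incidenceFinset] at he
    exact Finset.mem_erase.2 ⟨htot e he.1, Finset.mem_univ _⟩
  have hinj : Set.InjOn c (G.incidenceFinset v) := by
    intro e he f hf hef
    by_contra hne
    rw [Finset.mem_coe, mem_incidenceFinset] at he hf
    have hadj : EAdj e f := ⟨hne, v, he.2, hf.2⟩
    cases hce : c e with
    | none => exact htot e he.1 hce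
    | some a =>
      have := hp e f he.1 hf.1 hadj a hce
      rw [hef] at hce
      exact this hce
  have hcard := Finset.card_le_card_of_injOn c hmaps hinj
  rw [G.card_incidenceFinset_eq_degree] at hcard
  rw [Finset.card_erase_of_mem (Finset.mem_univ _)] at hcard
  simp only [Finset.card_univ, Fintype.card_option, Fintype.card_fin] at hcard
  omega

end CatProof

open EdgeGame SimpleGraph

/-- for a caterpillar T with Δ(T) ≥ 4 and m ≥ 2, χ'_g(T;m,1) = Δ(T). -/
theorem stmt5 {V : Type*} [Fintype V] (G : SimpleGraph V) [DecidableRel G.Adj]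
    (hC : IsCaterpillar G) (hdel : 4 ≤ G.maxDegree) (m : ℕ) (hm : 2 ≤ m) :
    gameChromIndex G m = G.maxDegree := by
  classical
  have hVne : Nonempty V := by
    by_contra h
    rw [not_nonempty_iff] at h
    have h0 : G.maxDegree = 0 := by
      simp only [SimpleGraph.maxDegree, Finset.univ_eq_empty, Finset.image_empty,
        Finset.max_empty]
      rfl
    omega
  have v0 : V := Classical.arbitrary V
  have hprop0 : Proper G (fun _ => (none : Option (Fin G.maxDegree))) := by
    intro e f _ _ _ a h
    cases h
  have hmem : MakerWins G m G.maxDegree (fun _ => none) true := by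
    refine CatProof.master G hC hdel (le_refl _) hm
      ((CatProof.UF G (fun _ => (none : Option (Fin G.maxDegree)))).card)
      _ (s(v0, v0)) (le_refl _) hprop0 ?_ ?_
    · intro e _ _ _ f _ _ _ hcf
      exact absurd rfl hcf
    · have : CatProof.W G (fun _ => (none : Option (Fin G.maxDegree))) s(v0, v0) = ∅ := by
        rw [Finset.eq_empty_iff_forall_notMem]
        intro x hx
        simp only [CatProof.W, Finset.mem_filter] at hx
        exact hx.2.2.2.2 rfl
      rw [this]; simp
  have hlb : ∀ j, MakerWins G m j (fun _ => none) true → G.maxDegree ≤ j := by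
    intro j hj
    have hprop0' : Proper G (fun _ => (none : Option (Fin j))) := by
      intro e f _ _ _ a h
      cases h
    obtain ⟨c', hp', htot⟩ := CatProof.extract G hj hprop0'
    obtain ⟨v, hv⟩ := G.exists_maximal_degree_vertex
    rw [hv]
    exact CatProof.degree_le_colors G hp' htot v
  have hset : gameChromIndex G m = sInf {k | MakerWins G m k (fun _ => none) true} := rfl
  rw [hset]
  apply le_antisymm
  · exact Nat.sInf_le hmem
  · have hsm : sInf {k | MakerWins G m k (fun _ => none) true} ∈
        {k | MakerWins G m k (fun _ => none) true} :=
      Nat.sInf_mem ⟨G.maxDegree, hmem⟩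
    exact hlb _ hsm
end

section
/- For every integer m ≥ 2, the (m,1)-game chromatic index of the wheel W_3 (with 4 vertices) equals 3. -/
open EdgeGame SimpleGraph

namespace W3

abbrev VV := Option (ZMod 3)

def EE : Fin 6 → Sym2 VV :=
  ![s(none, some 0), s(none, some 1), s(none, some 2),
    s(some 0, some 1), s(some 1, some 2), s(some 2, some 0)]

lemma adj_iff (a b : VV) : (wheel 3).Adj a b ↔ a ≠ b := by
  simp only [wheel, SimpleGraph.fromRel_adj]
  exact (by decide :
    ∀ a b : VV, (a ≠ b ∧ ((a = none ∨ ∃ i : ZMod 3, a = some i ∧ b = some (i + 1)) ∨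
      (b = none ∨ ∃ i : ZMod 3, b = some i ∧ a = some (i + 1)))) ↔ a ≠ b) a b

lemma edgeSet_eq : (wheel 3).edgeSet = ↑(Finset.univ.image EE) := by
  ext e
  induction e using Sym2.ind with
  | _ a b =>
    rw [SimpleGraph.mem_edgeSet, adj_iff]
    simp only [Finset.coe_image, Finset.coe_univ, Set.image_univ, Set.mem_range]
    exact (by decide : ∀ a b : VV, a ≠ b ↔ ∃ i : Fin 6, EE i = s(a, b)) a b

lemma mem_edge (i : Fin 6) : EE i ∈ (wheel 3).edgeSet := by
  rw [edgeSet_eq]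
  exact Finset.mem_coe.2 (Finset.mem_image_of_mem _ (Finset.mem_univ _))

def Agrees (c : Sym2 VV → Option (Fin 3)) (p : Fin 6 → Option (Fin 3)) : Prop :=
  ∀ i, c (EE i) = p i

def cnt (p : Fin 6 → Option (Fin 3)) : ℕ :=
  (Finset.univ.filter (fun i => p i = none)).card

def ProperP (p : Fin 6 → Option (Fin 3)) : Prop :=
  ∀ i j, EAdj (EE i) (EE j) → ∀ a, p i = some a → p j ≠ some a

def ExtendsP (p q : Fin 6 → Option (Fin 3)) : Prop :=
  ∀ i a, p i = some a → q i = some a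

instance : DecidablePred ProperP := fun p => by unfold ProperP EAdj; infer_instance
instance (p q) : Decidable (ExtendsP p q) := by unfold ExtendsP; infer_instance

lemma EE_inj : Function.Injective EE := by decide

lemma uncolored_eq {c p} (hA : Agrees c p) : uncolored (wheel 3) c = cnt p := by
  have hset : {e | e ∈ (wheel 3).edgeSet ∧ c e = none}
      = ↑((Finset.univ.image EE).filter (fun e => c e = none)) := by
    ext e
    simp [edgeSet_eq, Finset.mem_filter]
  rw [uncolored, hset, Set.ncard_coe_finset, Finset.filter_image,
    Finset.card_image_of_injective _ EE_inj, cnt]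
  congr 1
  apply Finset.filter_congr
  intro i _
  simp [Function.comp, hA i]

lemma proper_iff {c p} (hA : Agrees c p) : Proper (wheel 3) c ↔ ProperP p := by
  constructor
  · intro h i j hadj a hi
    have := h (EE i) (EE j) (mem_edge i) (mem_edge j) hadj a (by rw [hA i]; exact hi)
    rw [hA j] at this
    exact this
  · intro h e f he hf hadj a hea
    rw [edgeSet_eq] at he hf
    obtain ⟨i, -, rfl⟩ := Finset.mem_image.1 (Finset.mem_coe.1 he)
    obtain ⟨j, -, rfl⟩ := Finset.mem_image.1 (Finset.mem_coe.1 hf)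
    rw [hA i] at hea
    rw [hA j]
    exact h i j hadj a hea

def ov (q : Fin 6 → Option (Fin 3)) (c : Sym2 VV → Option (Fin 3)) : Sym2 VV → Option (Fin 3) :=
  fun e => if e = EE 0 then q 0 else if e = EE 1 then q 1 else if e = EE 2 then q 2
    else if e = EE 3 then q 3 else if e = EE 4 then q 4 else if e = EE 5 then q 5 else c e

lemma agrees_ov (q c) : Agrees (ov q c) q := by
  intro i
  fin_cases i <;> simp only [ov] <;>
    simp (config := { decide := true }) only [if_true, if_false] <;> rfl


lemma extends_ov {c p} (hA : Agrees c p) {q} (hE : ExtendsP p q) : Extends c (ov q c) := by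
  intro e a hce
  simp only [ov]
  split_ifs with h0 h1 h2 h3 h4 h5
  · subst h0; exact hE 0 a ((hA 0).symm.trans hce)
  · subst h1; exact hE 1 a ((hA 1).symm.trans hce)
  · subst h2; exact hE 2 a ((hA 2).symm.trans hce)
  · subst h3; exact hE 3 a ((hA 3).symm.trans hce)
  · subst h4; exact hE 4 a ((hA 4).symm.trans hce)
  · subst h5; exact hE 5 a ((hA 5).symm.trans hce)
  · exact hce

lemma cnt_zero_of_total {p} (h : ∀ i, p i ≠ none) : cnt p = 0 :=
  Finset.card_eq_zero.2 (Finset.filter_eq_empty_iff.2 fun i _ => h i)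

lemma total_of_cnt_zero {p} (h : cnt p = 0) : ∀ i, p i ≠ none := by
  intro i hi
  have h2 := Finset.card_eq_zero.1 h
  have h3 : i ∈ (∅ : Finset (Fin 6)) :=
    h2 ▸ (Finset.mem_filter.2 ⟨Finset.mem_univ i, hi⟩)
  simp at h3

lemma cnt_one_unique {q : Fin 6 → Option (Fin 3)} (h : cnt q = 1) {i} (hi : q i = none) :
    ∀ j, j ≠ i → q j ≠ none := by
  intro j hj hq
  have hsub : ({i, j} : Finset (Fin 6)) ⊆ Finset.univ.filter (fun i => q i = none) := by
    intro x hx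
    rcases Finset.mem_insert.1 hx with rfl | hx
    · exact Finset.mem_filter.2 ⟨Finset.mem_univ _, hi⟩
    · rw [Finset.mem_singleton.1 hx]
      exact Finset.mem_filter.2 ⟨Finset.mem_univ _, hq⟩
  have hc2 : ({i, j} : Finset (Fin 6)).card = 2 := by
    rw [Finset.card_insert_of_notMem (by simp [Ne.symm hj]), Finset.card_singleton]
  have hle := Finset.card_le_card hsub
  have hcq : (Finset.univ.filter (fun i => q i = none)).card = 1 := h
  rw [hc2, hcq] at hle
  omega

lemma cnt_lemma {p q : Fin 6 → Option (Fin 3)} (hE : ExtendsP p q) (h : cnt q + 1 = cnt p) :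
    ∃ i a, p i = none ∧ q = Function.update p i (some a) := by
  classical
  set A := Finset.univ.filter (fun i => q i = none) with hAdef
  set B := Finset.univ.filter (fun i => p i = none) with hBdef
  have hAB : A ⊆ B := by
    intro i hi
    simp only [hAdef, hBdef, Finset.mem_filter, Finset.mem_univ, true_and] at hi ⊢
    by_contra hpi
    obtain ⟨a, ha⟩ := Option.ne_none_iff_exists'.1 hpi
    rw [hE i a ha] at hi
    exact Option.some_ne_none a hi
  have hcard : (B \ A).card = 1 := by
    rw [Finset.card_sdiff_of_subset hAB]
    have : cnt q = A.card := rfl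
    have : cnt p = B.card := rfl
    omega
  obtain ⟨i, hi⟩ := Finset.card_eq_one.1 hcard
  have hiBA : i ∈ B \ A := hi ▸ Finset.mem_singleton_self i
  have hpnone : p i = none := by
    have := (Finset.mem_sdiff.1 hiBA).1
    simpa [hBdef] using this
  have hqi : q i ≠ none := by
    have := (Finset.mem_sdiff.1 hiBA).2
    simpa [hAdef] using this
  obtain ⟨a, ha⟩ := Option.ne_none_iff_exists'.1 hqi
  refine ⟨i, a, hpnone, funext fun j => ?_⟩
  rcases eq_or_ne j i with rfl | hj
  · rw [Function.update_self, ha]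
  · rw [Function.update_of_ne hj]
    cases hpj : p j with
    | some b => exact hE j b hpj
    | none =>
      by_contra hq
      have hjBA : j ∈ B \ A := Finset.mem_sdiff.2
        ⟨Finset.mem_filter.2 ⟨Finset.mem_univ _, hpj⟩,
         fun hjA => hq (by simpa [hAdef] using hjA)⟩
      rw [hi] at hjBA
      exact hj (Finset.mem_singleton.1 hjBA)

lemma breaker_inv {c p c'} (hA : Agrees c p) (hext : Extends c c')
    (hprop : Proper (wheel 3) c')
    (hcnt : uncolored (wheel 3) c' + 1 = uncolored (wheel 3) c) :
    ∃ i a, p i = none ∧ Agrees c' (Function.update p i (some a)) ∧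
      ProperP (Function.update p i (some a)) := by
  have hA' : Agrees c' (fun i => c' (EE i)) := fun i => rfl
  have hE : ExtendsP p (fun i => c' (EE i)) :=
    fun i a h => hext (EE i) a (by rw [hA i]; exact h)
  have hc : cnt (fun i => c' (EE i)) + 1 = cnt p := by
    rw [← uncolored_eq hA', ← uncolored_eq hA]; exact hcnt
  obtain ⟨i, a, h1, h2⟩ := cnt_lemma hE hc
  exact ⟨i, a, h1, h2 ▸ hA', (proper_iff (h2 ▸ hA')).1 hprop⟩

lemma all_node {m c b p} (hA : Agrees c p) (h : ∀ i, p i ≠ none) :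
    MakerWins (wheel 3) m 3 c b := by
  apply MakerWins.all
  intro e he
  rw [edgeSet_eq] at he
  obtain ⟨i, -, rfl⟩ := Finset.mem_image.1 (Finset.mem_coe.1 he)
  rw [hA i]
  exact h i

lemma maker_node {m c p} (hA : Agrees c p) (hne : cnt p ≠ 0) (q : Fin 6 → Option (Fin 3))
    (h1 : ExtendsP p q) (h2 : ProperP q) (h3 : cnt q = cnt p - min m (cnt p))
    (H : ∀ c', Agrees c' q → MakerWins (wheel 3) m 3 c' false) :
    MakerWins (wheel 3) m 3 c true :=
  MakerWins.maker c (ov q c) (by rw [uncolored_eq hA]; exact hne) (extends_ov hA h1)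
    ((proper_iff (agrees_ov q c)).2 h2)
    (by rw [uncolored_eq (agrees_ov q c), uncolored_eq hA, h3])
    (H _ (agrees_ov q c))

lemma breaker_node {m c p} (hA : Agrees c p) (hne : cnt p ≠ 0)
    (hcan : ∃ q', ExtendsP p q' ∧ ProperP q' ∧ cnt q' + 1 = cnt p)
    (H : ∀ i a, p i = none → ProperP (Function.update p i (some a)) →
      ∀ c', Agrees c' (Function.update p i (some a)) → MakerWins (wheel 3) m 3 c' true) :
    MakerWins (wheel 3) m 3 c false := by
  obtain ⟨q', hq1, hq2, hq3⟩ := hcan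
  apply MakerWins.breaker
  · rw [uncolored_eq hA]; exact hne
  · exact ⟨ov q' c, extends_ov hA hq1, (proper_iff (agrees_ov q' c)).2 hq2,
      by rw [uncolored_eq (agrees_ov q' c), uncolored_eq hA]; exact hq3⟩
  · intro c' he hp hc
    obtain ⟨i, a, h1, h2, h3⟩ := breaker_inv hA he hp hc
    exact H i a h1 h3 c' h2

lemma finishMove {m c p} (hA : Agrees c p) (hne : cnt p ≠ 0) (Q : Fin 6 → Option (Fin 3))
    (h1 : ExtendsP p Q) (h2 : ProperP Q) (h3 : ∀ i, Q i ≠ none) (h4 : cnt p ≤ m) :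
    MakerWins (wheel 3) m 3 c true :=
  maker_node hA hne Q h1 h2
    (by rw [cnt_zero_of_total h3, Nat.min_eq_right h4, Nat.sub_self])
    (fun c' hA' => all_node hA' h3)

lemma step2 {c p} (hA : Agrees c p) (q Q : Fin 6 → Option (Fin 3))
    (h1 : ExtendsP p q) (h2 : ProperP q) (h3 : cnt p = 3) (h4 : cnt q = 1)
    (h5 : ExtendsP q Q) (h6 : ProperP Q) (h7 : cnt Q + 1 = cnt q) :
    MakerWins (wheel 3) 2 3 c true := by
  apply maker_node hA (by omega) q h1 h2 (by rw [h4, h3]; omega)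
  intro c' hA'
  apply breaker_node hA' (by omega) ⟨Q, h5, h6, h7⟩
  intro i a hnone hP c'' hA''
  apply all_node hA''
  intro j
  rcases eq_or_ne j i with rfl | hj
  · rw [Function.update_self]; exact Option.some_ne_none _
  · rw [Function.update_of_ne hj]; exact cnt_one_unique h4 hnone j hj

def F : Fin 6 → Option (Fin 3) := ![some 0, some 1, some 2, some 2, some 0, some 1]



def F' : Fin 6 → Option (Fin 3) := ![some 0, some 2, some 1, some 1, some 0, some 2]
def P1 : Fin 6 → Option (Fin 3) := ![some 0, none, none, none, some 0, none]
def Qa : Fin 6 → Option (Fin 3) := ![some 0, some 1, some 2, some 2, some 0, none]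
def Qb : Fin 6 → Option (Fin 3) := ![some 0, some 2, some 1, some 1, some 0, none]
def Qa3 : Fin 6 → Option (Fin 3) := ![some 0, some 1, some 2, none, some 0, some 1]
def Qb3 : Fin 6 → Option (Fin 3) := ![some 0, some 2, some 1, none, some 0, some 2]
abbrev F2 := F'

lemma win2 : MakerWins (wheel 3) 2 3 (fun _ => none) true := by
  have hA0 : Agrees (fun _ => none) (fun _ => none) := fun i => rfl
  apply maker_node hA0 (by decide) P1 (by decide) (by decide) (by decide)
  intro c1 hA1
  apply breaker_node hA1 (by decide) ⟨Function.update P1 1 (some 1), by decide, by decide, by decide⟩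
  intro i a hnone hP c2 hA2
  fin_cases i
  · exact absurd hnone (by decide)
  · fin_cases a
    · exact absurd hP (by decide)
    · exact step2 hA2 Qa F (by decide) (by decide) (by decide) (by decide) (by decide) (by decide) (by decide)
    · exact step2 hA2 Qb F2 (by decide) (by decide) (by decide) (by decide) (by decide) (by decide) (by decide)
  · fin_cases a
    · exact absurd hP (by decide)
    · exact step2 hA2 Qb F2 (by decide) (by decide) (by decide) (by decide) (by decide) (by decide) (by decide)
    · exact step2 hA2 Qa F (by decide) (by decide) (by decide) (by decide) (by decide) (by decide) (by decide)
  · fin_cases a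
    · exact absurd hP (by decide)
    · exact step2 hA2 Qb F2 (by decide) (by decide) (by decide) (by decide) (by decide) (by decide) (by decide)
    · exact step2 hA2 Qa F (by decide) (by decide) (by decide) (by decide) (by decide) (by decide) (by decide)
  · exact absurd hnone (by decide)
  · fin_cases a
    · exact absurd hP (by decide)
    · exact step2 hA2 Qa3 F (by decide) (by decide) (by decide) (by decide) (by decide) (by decide) (by decide)
    · exact step2 hA2 Qb3 F2 (by decide) (by decide) (by decide) (by decide) (by decide) (by decide) (by decide)

lemma win3' : MakerWins (wheel 3) 3 3 (fun _ => none) true := by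
  have hA0 : Agrees (fun _ => none) (fun _ => none) := fun i => rfl
  apply maker_node hA0 (by decide) ![some 0, some 1, some 2, none, none, none]
    (by decide) (by decide) (by decide)
  intro c1 hA1
  apply breaker_node hA1 (by decide)
    ⟨![some 0, some 1, some 2, some 2, none, none], by decide, by decide, by decide⟩
  intro i a hnone hP c2 hA2
  fin_cases i
  · exact absurd hnone (by decide)
  · exact absurd hnone (by decide)
  · exact absurd hnone (by decide)
  · fin_cases a
    · exact absurd hP (by decide)
    · exact absurd hP (by decide)
    · exact finishMove hA2 (by decide) F (by decide) (by decide) (by decide) (by decide)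
  · fin_cases a
    · exact finishMove hA2 (by decide) F (by decide) (by decide) (by decide) (by decide)
    · exact absurd hP (by decide)
    · exact absurd hP (by decide)
  · fin_cases a
    · exact absurd hP (by decide)
    · exact finishMove hA2 (by decide) F (by decide) (by decide) (by decide) (by decide)
    · exact absurd hP (by decide)

lemma win4 : MakerWins (wheel 3) 4 3 (fun _ => none) true := by
  have hA0 : Agrees (fun _ => none) (fun _ => none) := fun i => rfl
  apply maker_node hA0 (by decide) ![some 0, some 1, some 2, some 2, none, none]
    (by decide) (by decide) (by decide)
  intro c1 hA1
  apply breaker_node hA1 (by decide)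
    ⟨![some 0, some 1, some 2, some 2, some 0, none], by decide, by decide, by decide⟩
  intro i a hnone hP c2 hA2
  fin_cases i
  · exact absurd hnone (by decide)
  · exact absurd hnone (by decide)
  · exact absurd hnone (by decide)
  · exact absurd hnone (by decide)
  · fin_cases a
    · exact finishMove hA2 (by decide) F (by decide) (by decide) (by decide) (by decide)
    · exact absurd hP (by decide)
    · exact absurd hP (by decide)
  · fin_cases a
    · exact absurd hP (by decide)
    · exact finishMove hA2 (by decide) F (by decide) (by decide) (by decide) (by decide)
    · exact absurd hP (by decide)

lemma win5 : MakerWins (wheel 3) 5 3 (fun _ => none) true := by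
  have hA0 : Agrees (fun _ => none) (fun _ => none) := fun i => rfl
  apply maker_node hA0 (by decide) ![some 0, some 1, some 2, some 2, some 0, none]
    (by decide) (by decide) (by decide)
  intro c1 hA1
  apply breaker_node hA1 (by decide) ⟨F, by decide, by decide, by decide⟩
  intro i a hnone hP c2 hA2
  fin_cases i
  · exact absurd hnone (by decide)
  · exact absurd hnone (by decide)
  · exact absurd hnone (by decide)
  · exact absurd hnone (by decide)
  · exact absurd hnone (by decide)
  · fin_cases a
    · exact absurd hP (by decide)
    · exact all_node hA2 (by decide)
    · exact absurd hP (by decide)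

lemma win3 (m : ℕ) (hm : 2 ≤ m) : MakerWins (wheel 3) m 3 (fun _ => none) true := by
  have hA0 : Agrees (fun _ => none) (fun _ => none) := fun i => rfl
  rcases Nat.lt_or_ge m 6 with h6 | h6
  · rcases (by omega : m = 2 ∨ m = 3 ∨ m = 4 ∨ m = 5) with rfl | rfl | rfl | rfl
    · exact win2
    · exact win3'
    · exact win4
    · exact win5
  · refine maker_node hA0 (by decide) F (by decide) (by decide) ?_
      (fun c' hA' => all_node hA' (by decide))
    have e1 : cnt F = 0 := by decide
    have e2 : cnt (fun _ : Fin 6 => (none : Option (Fin 3))) = 6 := by decide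
    rw [e1, e2]
    omega

lemma complete_of_win {V' : Type*} {G : SimpleGraph V'} {m k : ℕ}
    {c : Sym2 V' → Option (Fin k)} {b : Bool} (h : MakerWins G m k c b) :
    Proper G c → ∃ c₀ : Sym2 V' → Option (Fin k),
      Proper G c₀ ∧ ∀ e ∈ G.edgeSet, c₀ e ≠ none := by
  induction h with
  | all c b hall => intro hp; exact ⟨c, hp, hall⟩
  | maker c c' hne hext hprop hcount hnext ih => intro _; exact ih hprop
  | breaker c hne hcan hstep ih =>
    intro _
    obtain ⟨c', h1, h2, h3⟩ := hcan
    exact ih c' h1 h2 h3 h2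

lemma lower {m k : ℕ} (h : MakerWins (wheel 3) m k (fun _ => none) true) : 3 ≤ k := by
  obtain ⟨c₀, hp, hall⟩ := complete_of_win h (fun e f _ _ _ a h' => absurd h' (by simp))
  obtain ⟨a0, h0⟩ := Option.ne_none_iff_exists'.1 (hall (EE 0) (mem_edge 0))
  obtain ⟨a1, h1⟩ := Option.ne_none_iff_exists'.1 (hall (EE 1) (mem_edge 1))
  obtain ⟨a2, h2⟩ := Option.ne_none_iff_exists'.1 (hall (EE 2) (mem_edge 2))
  have e01 : EAdj (EE 0) (EE 1) := ⟨by decide, ⟨none, by decide, by decide⟩⟩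
  have e02 : EAdj (EE 0) (EE 2) := ⟨by decide, ⟨none, by decide, by decide⟩⟩
  have e12 : EAdj (EE 1) (EE 2) := ⟨by decide, ⟨none, by decide, by decide⟩⟩
  have d01 : a0 ≠ a1 := fun hEq =>
    hp (EE 0) (EE 1) (mem_edge 0) (mem_edge 1) e01 a0 h0 (by rw [h1, hEq])
  have d02 : a0 ≠ a2 := fun hEq =>
    hp (EE 0) (EE 2) (mem_edge 0) (mem_edge 2) e02 a0 h0 (by rw [h2, hEq])
  have d12 : a1 ≠ a2 := fun hEq =>
    hp (EE 1) (EE 2) (mem_edge 1) (mem_edge 2) e12 a1 h1 (by rw [h2, hEq])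
  by_contra hk
  push_neg at hk
  interval_cases k
  · exact a0.elim0
  · exact d01 (Subsingleton.elim _ _)
  · exact (by decide : ∀ x y z : Fin 2, x ≠ y → x ≠ z → y ≠ z → False) a0 a1 a2 d01 d02 d12

end W3

/-- for m ≥ 2, χ'_g(W_3; m, 1) = 3. -/
theorem stmt7 (m : ℕ) (hm : 2 ≤ m) :
    gameChromIndex (wheel 3) m = 3 := by
  have hmem : MakerWins (wheel 3) m 3 (fun _ => none) true := W3.win3 m hm
  have h1 : (3 : ℕ) ∈ {k | MakerWins (wheel 3) m k (fun _ => none) true} := hmem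
  unfold gameChromIndex
  refine le_antisymm (Nat.sInf_le h1) (le_csInf ⟨3, h1⟩ ?_)
  intro k hk
  exact W3.lower hk
end

section
/- For all positive integers m_1, m_2 such that m_1 = k·m_2 + k - 1 for some positive integer k, and every finite simple graph G, we have χ'_g(G; m_1, 1) ≤ χ'_g(G; m_2, 1). In particular, if m_1 is odd then χ'_g(G; m_1, 1) ≤ χ'_g(G; 1, 1) = χ'_g(G). -/
open EdgeGame SimpleGraph

section Aux

variable {V : Type*} [Fintype V]

lemma uncolored_eq_zero {G : SimpleGraph V} {k : ℕ} {c : Sym2 V → Option (Fin k)}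
    (h : ∀ e ∈ G.edgeSet, c e ≠ none) : uncolored G c = 0 := by
  have hs : {e | e ∈ G.edgeSet ∧ c e = none} = ∅ := by
    ext e
    simp only [Set.mem_setOf_eq, Set.mem_empty_iff_false, iff_false, not_and]
    exact fun he => h e he
  rw [uncolored, hs, Set.ncard_empty]

lemma all_of_uncolored_zero {G : SimpleGraph V} {k : ℕ} {c : Sym2 V → Option (Fin k)}
    (h : uncolored G c = 0) : ∀ e ∈ G.edgeSet, c e ≠ none := by
  rw [uncolored, Set.ncard_eq_zero (Set.toFinite _)] at h
  intro e he hc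
  have : e ∈ ({e | e ∈ G.edgeSet ∧ c e = none} : Set (Sym2 V)) := ⟨he, hc⟩
  rw [h] at this
  exact this

lemma extends_trans {k : ℕ} {c₁ c₂ c₃ : Sym2 V → Option (Fin k)}
    (h1 : Extends c₁ c₂) (h2 : Extends c₂ c₃) : Extends c₁ c₃ :=
  fun e a ha => h2 e a (h1 e a ha)

/-- Greedy one-step extension: with `Nat.card (Sym2 V)` colors, any proper partial
coloring can be properly extended at any uncolored edge. -/
lemma greedy_step {G : SimpleGraph V} {c : Sym2 V → Option (Fin (Nat.card (Sym2 V)))}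
    (hc : Proper G c) {e : Sym2 V} (he : e ∈ G.edgeSet) (hen : c e = none) :
    ∃ c', Extends c c' ∧ Proper G c' ∧ uncolored G c' + 1 = uncolored G c := by
  classical
  have hNE : Nonempty (Sym2 V) := ⟨e⟩
  have hKpos : 0 < Nat.card (Sym2 V) := Nat.card_pos
  let U : Set (Fin (Nat.card (Sym2 V))) := {a | ∃ f, f ∈ G.edgeSet ∧ c f = some a}
  have hUle : U.ncard ≤ (({e}ᶜ : Set (Sym2 V))).ncard := by
    apply Set.ncard_le_ncard_of_injOn
      (fun a => if h : ∃ f, f ∈ G.edgeSet ∧ c f = some a then h.choose else e)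
    · intro a ha
      have ha' : ∃ f, f ∈ G.edgeSet ∧ c f = some a := ha
      have hspec := ha'.choose_spec
      simp only [dif_pos ha', Set.mem_compl_iff, Set.mem_singleton_iff]
      intro hEq
      rw [hEq, hen] at hspec
      exact absurd hspec.2.symm (Option.some_ne_none _)
    · intro a ha b hb hab
      have ha' : ∃ f, f ∈ G.edgeSet ∧ c f = some a := ha
      have hb' : ∃ f, f ∈ G.edgeSet ∧ c f = some b := hb
      simp only [dif_pos ha', dif_pos hb'] at hab
      have h1 := ha'.choose_spec.2
      have h2 := hb'.choose_spec.2
      rw [hab, h2] at h1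
      exact (Option.some_injective _ h1).symm
  have hcompl : (({e}ᶜ : Set (Sym2 V))).ncard = Nat.card (Sym2 V) - 1 := by
    rw [Set.compl_eq_univ_diff, Set.ncard_diff_singleton_of_mem (Set.mem_univ e)
      , Set.ncard_univ]
  have hex : ∃ a : Fin (Nat.card (Sym2 V)), a ∉ U := by
    by_contra hcon
    push_neg at hcon
    have huniv : U = Set.univ := Set.eq_univ_of_forall hcon
    have hcard : U.ncard = Nat.card (Sym2 V) := by
      rw [huniv, Set.ncard_univ, Nat.card_eq_fintype_card, Fintype.card_fin]
    omega
  obtain ⟨a, ha⟩ := hex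
  refine ⟨fun g => if g = e then some a else c g, ?_, ?_, ?_⟩
  · intro g b hgb
    have hge : g ≠ e := by intro h; rw [h, hen] at hgb; exact absurd hgb.symm (Option.some_ne_none _)
    simp [hge, hgb]
  · intro e₁ e₂ h₁ h₂ hadj b hb1 hb2
    by_cases he1 : e₁ = e
    · have he2 : e₂ ≠ e := by
        intro h; exact hadj.1 (he1.trans h.symm)
      simp only [if_pos he1, if_neg he2] at hb1 hb2
      exact ha ⟨e₂, h₂, by rw [hb2, Option.some_injective _ hb1]⟩
    · simp only [if_neg he1] at hb1
      by_cases he2 : e₂ = e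
      · simp only [if_pos he2] at hb2
        have hab : a = b := Option.some_injective _ hb2
        exact ha ⟨e₁, h₁, by rw [hb1, hab]⟩
      · simp only [if_neg he2] at hb2
        exact hc e₁ e₂ h₁ h₂ hadj b hb1 hb2
  · have hset : {g | g ∈ G.edgeSet ∧ (if g = e then some a else c g) = none}
        = {g | g ∈ G.edgeSet ∧ c g = none} \ {e} := by
      ext g
      simp only [Set.mem_setOf_eq, Set.mem_diff, Set.mem_singleton_iff]
      constructor
      · rintro ⟨hg, hg2⟩
        by_cases hge : g = e
        · rw [if_pos hge] at hg2; exact absurd hg2 (Option.some_ne_none _)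
        · rw [if_neg hge] at hg2; exact ⟨⟨hg, hg2⟩, hge⟩
      · rintro ⟨⟨hg, hg2⟩, hge⟩
        exact ⟨hg, by rw [if_neg hge]; exact hg2⟩
    show {g | g ∈ G.edgeSet ∧ (if g = e then some a else c g) = none}.ncard + 1
        = {g | g ∈ G.edgeSet ∧ c g = none}.ncard
    rw [hset]
    exact Set.ncard_diff_singleton_add_one ⟨he, hen⟩ (Set.toFinite _)

/-- Greedy multi-step extension. -/
lemma greedy_many {G : SimpleGraph V} :
    ∀ (t : ℕ) (c : Sym2 V → Option (Fin (Nat.card (Sym2 V)))), Proper G c →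
      t ≤ uncolored G c →
      ∃ c', Extends c c' ∧ Proper G c' ∧ uncolored G c' = uncolored G c - t := by
  intro t
  induction t with
  | zero => intro c hc _; exact ⟨c, fun e a ha => ha, hc, by omega⟩
  | succ t IH =>
    intro c hc ht
    have hne : ({e | e ∈ G.edgeSet ∧ c e = none} : Set (Sym2 V)).Nonempty := by
      apply Set.nonempty_of_ncard_ne_zero
      show uncolored G c ≠ 0
      omega
    obtain ⟨e, he, hen⟩ := hne
    obtain ⟨c₁, hx1, hp1, hc1⟩ := greedy_step hc he hen
    obtain ⟨c₂, hx2, hp2, hc2⟩ := IH c₁ hp1 (by omega)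
    exact ⟨c₂, extends_trans hx1 hx2, hp2, by omega⟩

/-- With `Nat.card (Sym2 V)` colors Maker wins from any proper position. -/
lemma winAll {G : SimpleGraph V} {m : ℕ} (hm : 1 ≤ m) :
    ∀ (n : ℕ) (c : Sym2 V → Option (Fin (Nat.card (Sym2 V)))) (b : Bool),
      uncolored G c ≤ n → Proper G c → MakerWins G m (Nat.card (Sym2 V)) c b := by
  intro n
  induction n using Nat.strong_induction_on with
  | _ n IH =>
    intro c b hn hc
    by_cases hu : uncolored G c = 0
    · exact MakerWins.all c b (all_of_uncolored_zero hu)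
    · cases b with
      | false =>
        have hne : ({e | e ∈ G.edgeSet ∧ c e = none} : Set (Sym2 V)).Nonempty := by
          apply Set.nonempty_of_ncard_ne_zero
          exact hu
        obtain ⟨e, he, hen⟩ := hne
        obtain ⟨c', h1, h2, h3⟩ := greedy_step hc he hen
        refine MakerWins.breaker c hu ⟨c', h1, h2, h3⟩ ?_
        intro c'' _ hp'' hc''
        exact IH (uncolored G c'') (by omega) c'' true le_rfl hp''
      | true =>
        obtain ⟨c', h1, h2, h3⟩ :=
          greedy_many (min m (uncolored G c)) c hc (min_le_right _ _)
        refine MakerWins.maker c c' hu h1 h2 h3 ?_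
        have hmin : 1 ≤ min m (uncolored G c) := by omega
        exact IH (uncolored G c') (by omega) c' false le_rfl h2

/-- Key simulation: starting from a Maker-to-move position in the `(m,1)` game,
Maker can play `r+1` of his own moves interleaved with `r` self-chosen breaker
moves, coloring `min ((r+1)*(m+1)-1) u` edges in total. -/
lemma afterSteps {G : SimpleGraph V} {m K : ℕ} :
    ∀ (r : ℕ) (c : Sym2 V → Option (Fin K)), MakerWins G m K c true → uncolored G c ≠ 0 →
      ∃ c', Extends c c' ∧ Proper G c' ∧
        uncolored G c' = uncolored G c - min ((r+1)*(m+1)-1) (uncolored G c) ∧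
        ((∀ e ∈ G.edgeSet, c' e ≠ none) ∨ MakerWins G m K c' false) := by
  intro r
  induction r with
  | zero =>
    intro c hW hu
    cases hW with
    | all _ _ hall => exact absurd (uncolored_eq_zero hall) hu
    | maker _ c' hne hext hprop hcount hnext =>
      refine ⟨c', hext, hprop, ?_, Or.inr hnext⟩
      have : (0+1)*(m+1)-1 = m := by omega
      rw [this]
      exact hcount
  | succ r IH =>
    intro c hW hu
    obtain ⟨c₁, hx1, hp1, hc1, hd1⟩ := IH c hW hu
    have hAB : (r+1+1)*(m+1)-1 = ((r+1)*(m+1)-1) + (m+1) := by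
      have h1 : (r+1+1)*(m+1) = (r+1)*(m+1) + (m+1) := by ring
      have h2 : 1 ≤ (r+1)*(m+1) := Nat.one_le_iff_ne_zero.2 (Nat.mul_ne_zero (by omega) (by omega))
      omega
    rw [hAB]
    set A := (r+1)*(m+1)-1 with hA
    by_cases h0 : uncolored G c₁ = 0
    · exact ⟨c₁, hx1, hp1, by omega, Or.inl (all_of_uncolored_zero h0)⟩
    · have hWf : MakerWins G m K c₁ false := by
        rcases hd1 with h | h
        · exact absurd (uncolored_eq_zero h) h0
        · exact h
      cases hWf with
      | all _ _ hall => exact absurd (uncolored_eq_zero hall) h0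
      | breaker _ hne hcan hcont =>
        obtain ⟨c₂, hx2, hp2, hc2⟩ := hcan
        have hW2 : MakerWins G m K c₂ true := hcont c₂ hx2 hp2 hc2
        by_cases h02 : uncolored G c₂ = 0
        · exact ⟨c₂, extends_trans hx1 hx2, hp2, by omega,
            Or.inl (all_of_uncolored_zero h02)⟩
        · cases hW2 with
          | all _ _ hall => exact absurd (uncolored_eq_zero hall) h02
          | maker _ c₃ hne3 hx3 hp3 hc3 hnext =>
            exact ⟨c₃, extends_trans (extends_trans hx1 hx2) hx3, hp3, by omega,
              Or.inr hnext⟩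

/-- A winning Maker strategy for the `(m₂,1)` game transfers to the `(m₁,1)` game
when `m₁ = k·m₂ + k - 1`. -/
lemma transfer {G : SimpleGraph V} {m₁ m₂ k K : ℕ} (hm₂ : 1 ≤ m₂) (hk : 1 ≤ k)
    (h : m₁ = k * m₂ + k - 1) :
    ∀ (n : ℕ) (c : Sym2 V → Option (Fin K)) (b : Bool), uncolored G c ≤ n →
      MakerWins G m₂ K c b → MakerWins G m₁ K c b := by
  have hm₁eq : m₁ = (k - 1 + 1) * (m₂ + 1) - 1 := by
    have hk1 : k - 1 + 1 = k := by omega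
    rw [hk1, Nat.mul_succ]
    exact h
  have hm₁ : 1 ≤ m₁ := by
    have h1 : 1 ≤ k * m₂ := Nat.one_le_iff_ne_zero.2 (Nat.mul_ne_zero (by omega) (by omega))
    omega
  intro n
  induction n using Nat.strong_induction_on with
  | _ n IH =>
    intro c b hn hW
    cases b with
    | false =>
      cases hW with
      | all _ _ hall => exact MakerWins.all c false hall
      | breaker _ hne hcan hcont =>
        refine MakerWins.breaker c hne hcan ?_
        intro c' hx hp hcn
        exact IH (uncolored G c') (by omega) c' true le_rfl (hcont c' hx hp hcn)
    | true =>
      by_cases hu : uncolored G c = 0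
      · exact MakerWins.all c true (all_of_uncolored_zero hu)
      · obtain ⟨c', hx, hp, hcnt, hd⟩ := afterSteps (k-1) c hW hu
        rw [← hm₁eq] at hcnt
        refine MakerWins.maker c c' hu hx hp hcnt ?_
        rcases hd with hall | hWf
        · exact MakerWins.all c' false hall
        · exact IH (uncolored G c') (by omega) c' false le_rfl hWf

lemma gameChromIndex_le {G : SimpleGraph V} {m₁ m₂ k : ℕ} (hm₂ : 1 ≤ m₂) (hk : 1 ≤ k)
    (h : m₁ = k * m₂ + k - 1) : gameChromIndex G m₁ ≤ gameChromIndex G m₂ := by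
  have hprop0 : Proper G (fun _ : Sym2 V => (none : Option (Fin (Nat.card (Sym2 V))))) := by
    intro e f _ _ _ a ha
    exact absurd ha (by simp)
  have hne : (Nat.card (Sym2 V)) ∈ {K | MakerWins G m₂ K (fun _ => none) true} :=
    winAll hm₂ (uncolored G (fun _ => none)) _ true le_rfl hprop0
  have hmem : gameChromIndex G m₂ ∈ {K | MakerWins G m₂ K (fun _ => none) true} :=
    Nat.sInf_mem ⟨_, hne⟩
  exact Nat.sInf_le (transfer hm₂ hk h _ _ true le_rfl hmem)

end Aux

/-- if m₁ = k·m₂ + k - 1 then χ'_g(G;m₁,1) ≤ χ'_g(G;m₂,1);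
in particular for odd m, χ'_g(G;m,1) ≤ χ'_g(G;1,1). -/
theorem stmt12 {V : Type*} [Fintype V] (G : SimpleGraph V) (m₁ m₂ k : ℕ)
    (hm₁ : 1 ≤ m₁) (hm₂ : 1 ≤ m₂) (hk : 1 ≤ k) (h : m₁ = k * m₂ + k - 1) :
    gameChromIndex G m₁ ≤ gameChromIndex G m₂ ∧
    (∀ m : ℕ, Odd m → gameChromIndex G m ≤ gameChromIndex G 1) := by
  constructor
  · exact gameChromIndex_le hm₂ hk h
  · intro m hm
    obtain ⟨t, ht⟩ := hm
    exact gameChromIndex_le (k := t + 1) le_rfl (by omega) (by omega)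
end
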